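/- arXiv:1908.03192 — 5 statements merged into one kernel-verified Lean document; each statement's English description precedes it below -/
import Mathlib

section
/- The operator $T:\ell^1\to\ell^\infty$ defined by $T(x_1,x_2,\ldots)=(\sum_{i=1}^\infty x_i,\sum_{i=1}^\infty x_i,\ldots)$ is $\sigma$-order-to-norm continuous but not unbounded $\sigma$-order-to-norm continuous. -/
open Filter Topology

section Defs
variable {α : Type*} [Lattice α] [AddCommGroup α]

/-- Order convergence to zero of a net, witnessed by a decreasing dominating net. -/
def OConvZero {ι : Type*} [Preorder ι] (x : ι → α) : Prop :=
  ∃ (κ : Type) (_ : Nonempty κ) (_ : Preorder κ) (_ : IsDirected κ (· ≤ ·)) (z : κ → α),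
    Antitone z ∧ IsGLB (Set.range z) 0 ∧ ∀ β : κ, ∃ α₀, ∀ a ≥ α₀, |x a| ≤ z β

/-- Unbounded order convergence to zero of a net. -/
def UOConvZero {ι : Type*} [Preorder ι] (x : ι → α) : Prop :=
  ∀ u : α, 0 ≤ u → OConvZero (fun a => |x a| ⊓ u)

end Defs

/-- Unbounded norm convergence to zero of a net in a normed lattice. -/
def UNConvZero {α : Type*} [NormedAddCommGroup α] [Lattice α] {ι : Type*} [Preorder ι]
    (x : ι → α) : Prop :=
  ∀ u : α, 0 ≤ u → Tendsto (fun a => ‖|x a| ⊓ u‖) atTop (𝓝 0)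

def SigmaOrderToNormContinuous {E F : Type*} [Lattice E] [AddCommGroup E] [Module ℝ E]
    [NormedAddCommGroup F] [Lattice F] [HasSolidNorm F] [IsOrderedAddMonoid F] [Module ℝ F] (T : E →ₗ[ℝ] F) : Prop :=
  ∀ x : ℕ → E, OConvZero x → Tendsto (fun n => ‖T (x n)‖) atTop (𝓝 0)

def SigmaUonContinuous {E F : Type*} [Lattice E] [AddCommGroup E] [Module ℝ E]
    [NormedAddCommGroup F] [Lattice F] [HasSolidNorm F] [IsOrderedAddMonoid F] [Module ℝ F] (T : E →ₗ[ℝ] F) : Prop :=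
  ∀ x : ℕ → E, UOConvZero x → Tendsto (fun n => ‖T (x n)‖) atTop (𝓝 0)

namespace SummingAux
open MeasureTheory

lemma ae_all {P : ℕ → Prop} (h : ∀ᵐ a ∂(Measure.count : Measure ℕ), P a) (a : ℕ) : P a := by
  rw [MeasureTheory.ae_iff, Measure.count_eq_zero_iff] at h
  by_contra ha
  exact Set.eq_empty_iff_forall_notMem.mp h a ha

lemma summable_norm (g : Lp ℝ 1 (Measure.count : Measure ℕ)) :
    Summable (fun a => ‖(g : ℕ → ℝ) a‖) :=
  integrable_count_iff.mp (L1.integrable_coeFn g)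

lemma norm_eq_tsum (g : Lp ℝ 1 (Measure.count : Measure ℕ)) :
    ‖g‖ = ∑' a, ‖(g : ℕ → ℝ) a‖ := by
  rw [L1.norm_eq_integral_norm, integral_countable' (L1.integrable_coeFn g).norm]
  simp [Measure.count_singleton]

lemma count_ne_zero : (Measure.count : Measure ℕ) ≠ 0 := by
  intro h
  have h1 := Measure.count_singleton (0 : ℕ)
  rw [h] at h1
  simp at h1

lemma count_singleton_ne_top (n : ℕ) : (Measure.count : Measure ℕ) {n} ≠ ⊤ := by
  rw [Measure.count_singleton]
  exact ENNReal.one_ne_top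

variable (T : Lp ℝ 1 (Measure.count : Measure ℕ) →ₗ[ℝ] Lp ℝ ⊤ (Measure.count : Measure ℕ))
variable (hTdef : ∀ x : Lp ℝ 1 (Measure.count : Measure ℕ),
      (T x : ℕ → ℝ) =ᵐ[(Measure.count : Measure ℕ)]
        fun _ => ∫ a, x a ∂(Measure.count : Measure ℕ))

include hTdef in
lemma normT_eq (x : Lp ℝ 1 (Measure.count : Measure ℕ)) :
    ‖T x‖ = |∫ a, x a ∂(Measure.count : Measure ℕ)| := by
  rw [Lp.norm_def, eLpNorm_congr_ae (hTdef x), eLpNorm_exponent_top,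
    eLpNormEssSup_const _ count_ne_zero]
  simp [Real.norm_eq_abs]

include hTdef in
lemma normT_le (x : Lp ℝ 1 (Measure.count : Measure ℕ)) : ‖T x‖ ≤ ‖x‖ := by
  rw [normT_eq T hTdef x, L1.norm_eq_integral_norm]
  calc |∫ a, x a ∂(Measure.count : Measure ℕ)|
      = ‖∫ a, x a ∂(Measure.count : Measure ℕ)‖ := (Real.norm_eq_abs _).symm
    _ ≤ ∫ a, ‖x a‖ ∂(Measure.count : Measure ℕ) := norm_integral_le_integral_norm _

/-- pointwise comparison from Lp comparison -/
lemma pt_le {p : ENNReal} {f g : Lp ℝ p (Measure.count : Measure ℕ)} (h : f ≤ g) (a : ℕ) :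
    (f : ℕ → ℝ) a ≤ (g : ℕ → ℝ) a :=
  ae_all ((Lp.coeFn_le f g).mpr h) a

/-- pointwise value from an a.e. identification of an Lp function -/
lemma pt_eq {p : ENNReal} (f : Lp ℝ p (Measure.count : Measure ℕ)) (g : ℕ → ℝ)
    (h : (f : ℕ → ℝ) =ᵐ[(Measure.count : Measure ℕ)] g) (a : ℕ) : (f : ℕ → ℝ) a = g a :=
  ae_all h a

lemma coeFn_zero_pt {p : ENNReal} (a : ℕ) :
    ((0 : Lp ℝ p (Measure.count : Measure ℕ)) : ℕ → ℝ) a = 0 :=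
  pt_eq _ (0 : ℕ → ℝ) (Lp.coeFn_zero ℝ p _) a

/-- pointwise nonnegativity from Lp nonnegativity -/
lemma pt_nonneg {p : ENNReal} {g : Lp ℝ p (Measure.count : Measure ℕ)} (hg : 0 ≤ g) (a : ℕ) :
    0 ≤ (g : ℕ → ℝ) a := by
  have h := pt_le hg a
  rwa [coeFn_zero_pt] at h

/-- Order continuity of the ℓ¹ norm: a decreasing net with infimum 0 has norms
tending to 0. -/
lemma exists_small {κ : Type} [Nonempty κ] [Preorder κ] [IsDirected κ (· ≤ ·)]
    (z : κ → Lp ℝ 1 (Measure.count : Measure ℕ)) (hanti : Antitone z)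
    (hglb : IsGLB (Set.range z) 0) {ε : ℝ} (hε : 0 < ε) : ∃ β, ‖z β‖ < ε := by
  classical
  have hz0 : ∀ β, (0 : Lp ℝ 1 (Measure.count : Measure ℕ)) ≤ z β :=
    fun β => hglb.1 (Set.mem_range_self β)
  have hz0' : ∀ β a, 0 ≤ (z β : ℕ → ℝ) a := fun β => pt_nonneg (hz0 β)
  -- pointwise the infimum is 0
  have hpt : ∀ (a : ℕ) (δ : ℝ), 0 < δ → ∃ β, (z β : ℕ → ℝ) a < δ := by
    intro a δ hδ
    by_contra hc
    push_neg at hc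
    set e : Lp ℝ 1 (Measure.count : Measure ℕ) :=
      indicatorConstLp 1 (measurableSet_singleton a) (count_singleton_ne_top a) δ with he
    have hle : ∀ β, e ≤ z β := by
      intro β
      rw [← Lp.coeFn_le]
      filter_upwards [indicatorConstLp_coeFn
        (hs := measurableSet_singleton a) (hμs := count_singleton_ne_top a) (c := δ)] with b hb
      rw [hb]
      by_cases hba : b ∈ ({a} : Set ℕ)
      · rw [Set.indicator_of_mem hba]
        rcases hba with rfl
        exact hc β
      · rw [Set.indicator_of_notMem hba]
        exact hz0' β b
    have he0 : e ≤ 0 := hglb.2 (by rintro y ⟨β, rfl⟩; exact hle β)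
    have hkey : δ ≤ 0 := by
      have h1 := pt_le he0 a
      have h3 := pt_eq e (Set.indicator {a} (fun _ => δ)) (indicatorConstLp_coeFn
        (hs := measurableSet_singleton a) (hμs := count_singleton_ne_top a) (c := δ)) a
      rw [coeFn_zero_pt, h3, Set.indicator_of_mem (Set.mem_singleton a)] at h1
      exact h1
    linarith
  -- tail estimate at an arbitrary index
  obtain ⟨β₀⟩ := (inferInstance : Nonempty κ)
  have hε2 : 0 < ε / 2 := by linarith
  have hsum0 := summable_norm (z β₀)
  obtain ⟨N, hN⟩ : ∃ N, ∑' a, ‖(z β₀ : ℕ → ℝ) a‖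
      - ∑ i ∈ Finset.range N, ‖(z β₀ : ℕ → ℝ) i‖ < ε / 2 := by
    have ht := hsum0.hasSum.tendsto_sum_nat
    rw [Metric.tendsto_atTop] at ht
    obtain ⟨N, hN⟩ := ht (ε / 2) hε2
    refine ⟨N, ?_⟩
    have := hN N le_rfl
    rw [Real.dist_eq] at this
    have h2 := abs_lt.mp this
    linarith [h2.1]
  set δ : ℝ := ε / (2 * (N + 1)) with hδdef
  have hδ : 0 < δ := by positivity
  -- choose indices making the head coordinates small, and an upper bound
  have hch : ∀ a : ℕ, ∃ β, (z β : ℕ → ℝ) a < δ := fun a => hpt a δ hδ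
  choose c hc using hch
  obtain ⟨M, hM⟩ := Finset.exists_le (insert β₀ ((Finset.range N).image c))
  have hMβ₀ : β₀ ≤ M := hM β₀ (Finset.mem_insert_self _ _)
  have hMc : ∀ a ∈ Finset.range N, c a ≤ M := fun a ha =>
    hM (c a) (Finset.mem_insert_of_mem (Finset.mem_image_of_mem c ha))
  refine ⟨M, ?_⟩
  have hsumM := summable_norm (z M)
  have hsplit := Summable.sum_add_tsum_compl (s := Finset.range N) hsumM
  rw [norm_eq_tsum, ← hsplit]
  have hhead : ∑ a ∈ Finset.range N, ‖(z M : ℕ → ℝ) a‖ < ε / 2 := by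
    have hterm : ∀ a ∈ Finset.range N, ‖(z M : ℕ → ℝ) a‖ ≤ δ := by
      intro a ha
      rw [Real.norm_eq_abs, abs_of_nonneg (hz0' M a)]
      exact le_of_lt (lt_of_le_of_lt (pt_le (hanti (hMc a ha)) a) (hc a))
    calc ∑ a ∈ Finset.range N, ‖(z M : ℕ → ℝ) a‖
        ≤ ∑ _a ∈ Finset.range N, δ := Finset.sum_le_sum hterm
      _ = N * δ := by rw [Finset.sum_const, Finset.card_range]; ring
      _ < ε / 2 := by
          rw [hδdef, ← mul_div_assoc, div_lt_div_iff₀ (by positivity) two_pos]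
          nlinarith [Nat.cast_nonneg (α := ℝ) N, hε]
  have htail : ∑' a : ↑(↑(Finset.range N) : Set ℕ)ᶜ, ‖(z M : ℕ → ℝ) a‖ < ε / 2 := by
    have hle : ∑' a : ↑(↑(Finset.range N) : Set ℕ)ᶜ, ‖(z M : ℕ → ℝ) a‖
        ≤ ∑' a : ↑(↑(Finset.range N) : Set ℕ)ᶜ, ‖(z β₀ : ℕ → ℝ) a‖ := by
      refine Summable.tsum_le_tsum ?_ (hsumM.subtype _) (hsum0.subtype _)
      intro a
      rw [Real.norm_eq_abs, Real.norm_eq_abs,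
        abs_of_nonneg (hz0' M _), abs_of_nonneg (hz0' β₀ _)]
      exact pt_le (hanti hMβ₀) _
    have heq : ∑' a : ↑(↑(Finset.range N) : Set ℕ)ᶜ, ‖(z β₀ : ℕ → ℝ) a‖
        = ∑' a, ‖(z β₀ : ℕ → ℝ) a‖ - ∑ i ∈ Finset.range N, ‖(z β₀ : ℕ → ℝ) i‖ := by
      have := Summable.sum_add_tsum_compl (s := Finset.range N) hsum0
      linarith
    rw [heq] at hle
    exact lt_of_le_of_lt hle hN
  linarith

end SummingAux

open SummingAux in
open MeasureTheory in
/-- the operator T : ℓ¹ → ℓ∞, x ↦ (∑ᵢ xᵢ, ∑ᵢ xᵢ, …) is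
σ-order-to-norm continuous but not unbounded σ-order-to-norm continuous.
Here ℓ¹ and ℓ∞ are realized as Lp spaces of the counting measure on ℕ. -/
theorem summing_operator_sigmaOrderToNorm_not_sigmaUon
    (T : Lp ℝ 1 (Measure.count : Measure ℕ) →ₗ[ℝ] Lp ℝ ⊤ (Measure.count : Measure ℕ))
    (hTdef : ∀ x : Lp ℝ 1 (Measure.count : Measure ℕ),
      (T x : ℕ → ℝ) =ᵐ[(Measure.count : Measure ℕ)]
        fun _ => ∫ a, x a ∂(Measure.count : Measure ℕ)) :
    SigmaOrderToNormContinuous T ∧ ¬ SigmaUonContinuous T := by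
  constructor
  · -- σ-order-to-norm continuous
    intro x hx
    obtain ⟨κ, hne, hpre, hdir, z, hanti, hglb, hdom⟩ := hx
    letI := hpre
    letI := hne
    letI := hdir
    rw [Metric.tendsto_atTop]
    intro ε hε
    obtain ⟨β, hβ⟩ := exists_small z hanti hglb hε
    obtain ⟨n₀, hn₀⟩ := hdom β
    refine ⟨n₀, fun n hn => ?_⟩
    rw [Real.dist_eq, sub_zero, abs_of_nonneg (norm_nonneg _)]
    have hzβ : (0 : Lp ℝ 1 (Measure.count : Measure ℕ)) ≤ z β := hglb.1 (Set.mem_range_self β)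
    calc ‖T (x n)‖ ≤ ‖x n‖ := normT_le T hTdef (x n)
      _ ≤ ‖z β‖ := norm_le_norm_of_abs_le_abs
          (by rw [abs_of_nonneg hzβ]; exact hn₀ n hn)
      _ < ε := hβ
  · -- not unbounded σ-order-to-norm continuous
    intro hcon
    set x : ℕ → Lp ℝ 1 (Measure.count : Measure ℕ) := fun n =>
      indicatorConstLp 1 (measurableSet_singleton n) (count_singleton_ne_top n) 1 with hxdef
    have hxc : ∀ n a, (x n : ℕ → ℝ) a = Set.indicator {n} (fun _ => (1:ℝ)) a := fun n =>
      ae_all (indicatorConstLp_coeFn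
        (hs := measurableSet_singleton n) (hμs := count_singleton_ne_top n) (c := (1:ℝ)))
    have hint : ∀ n, ∫ a, (x n : ℕ → ℝ) a ∂(Measure.count : Measure ℕ) = 1 := by
      intro n
      rw [integral_congr_ae (indicatorConstLp_coeFn
        (hs := measurableSet_singleton n) (hμs := count_singleton_ne_top n) (c := (1:ℝ)))]
      rw [integral_indicator_const (1:ℝ) (measurableSet_singleton n)]
      simp [Measure.count_singleton]
    have hnorm : ∀ n, ‖T (x n)‖ = 1 := by
      intro n
      rw [normT_eq T hTdef, hint n]
      norm_num
    have huo : UOConvZero x := by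
      intro u hu
      have hu' : ∀ a, 0 ≤ (u : ℕ → ℝ) a := pt_nonneg hu
      have hsm : ∀ k : ℕ, MemLp (Set.indicator {j | k ≤ j} (u : ℕ → ℝ)) 1
          (Measure.count : Measure ℕ) := by
        intro k
        refine MemLp.of_le (Lp.memLp u)
          ((Lp.aestronglyMeasurable u).indicator ((Set.to_countable _).measurableSet))
          (Filter.Eventually.of_forall fun a => norm_indicator_le_norm_self _ _)
      set z : ℕ → Lp ℝ 1 (Measure.count : Measure ℕ) := fun k => (hsm k).toLp _ with hzdef
      have hzc : ∀ k a, (z k : ℕ → ℝ) a = Set.indicator {j | k ≤ j} (u : ℕ → ℝ) a :=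
        fun k => ae_all ((hsm k).coeFn_toLp)
      have hznn : ∀ k a, 0 ≤ (z k : ℕ → ℝ) a := by
        intro k a
        rw [hzc]
        exact Set.indicator_nonneg (fun b _ => hu' b) a
      refine ⟨ℕ, inferInstance, inferInstance, inferInstance, z, ?_, ?_, ?_⟩
      · -- Antitone
        intro k k' hkk'
        rw [← Lp.coeFn_le]
        refine Filter.Eventually.of_forall fun a => ?_
        rw [hzc, hzc]
        exact Set.indicator_le_indicator_of_subset (fun b hb => le_trans hkk' hb)
          (fun b => hu' b) a
      · -- IsGLB
        constructor
        · rintro y ⟨k, rfl⟩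
          rw [← Lp.coeFn_le]
          filter_upwards [Lp.coeFn_zero ℝ 1 (Measure.count : Measure ℕ)] with a h0
          rw [h0]
          exact hznn k a
        · intro w hw
          have hwk : ∀ k a, (w : ℕ → ℝ) a ≤ (z k : ℕ → ℝ) a :=
            fun k => pt_le (hw ⟨k, rfl⟩)
          rw [← Lp.coeFn_le]
          filter_upwards [Lp.coeFn_zero ℝ 1 (Measure.count : Measure ℕ)] with a h0
          rw [h0]
          have h1 := hwk (a + 1) a
          rw [hzc, Set.indicator_of_notMem (by simp)] at h1
          exact h1
      · -- domination
        intro k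
        refine ⟨k, fun n hn => ?_⟩
        have habs : |x n| ⊓ u ≤ z k := by
          rw [← Lp.coeFn_le]
          filter_upwards [Lp.coeFn_inf |x n| u, Lp.coeFn_abs (x n)] with a h1 h2
          rw [h1, Pi.inf_apply, h2, hxc, hzc]
          by_cases ha : a = n
          · rw [ha, Set.indicator_of_mem (Set.mem_singleton n),
              Set.indicator_of_mem (show n ∈ {j | k ≤ j} from hn)]
            exact inf_le_right
          · rw [Set.indicator_of_notMem (by simp [ha])]
            refine le_trans inf_le_left ?_
            rw [abs_zero]
            exact Set.indicator_nonneg (fun b _ => hu' b) a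
        have hnn : (0 : Lp ℝ 1 (Measure.count : Measure ℕ)) ≤ |x n| ⊓ u :=
          le_inf (abs_nonneg _) hu
        show |(|x n| ⊓ u)| ≤ z k
        rw [abs_of_nonneg hnn]
        exact habs
    have hten := hcon x huo
    rw [Metric.tendsto_atTop] at hten
    obtain ⟨n₀, h⟩ := hten (1 / 2) (by norm_num)
    have h2 := h n₀ le_rfl
    rw [Real.dist_eq, sub_zero, hnorm n₀] at h2
    norm_num at h2
end

section
/- Let $E$ be a Dedekind $\sigma$-complete and laterally $\sigma$-complete vector lattice and $F$ a normed lattice. Then every $\sigma$-order-to-norm continuous operator $T:E\to F$ is unbounded $\sigma$-order-to-norm continuous. -/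
open Filter Topology

section Helpers
variable {E : Type*} [Lattice E] [AddCommGroup E] [CovariantClass E E (· + ·) (· ≤ ·)]

local instance myOACG : IsOrderedAddMonoid E :=
  { add_le_add_left := fun a b h c => by rw [add_comm a c, add_comm b c]; exact add_le_add_right h c }

lemma my_pp_def (a b : E) : (a - b)⁺ = a ⊔ b - b := by
  rw [posPart_def, sup_sub, sub_self]

lemma my_pp_mono {a b : E} (h : a ≤ b) (c : E) : (a - c)⁺ ≤ (b - c)⁺ := by
  rw [posPart_def, posPart_def]
  exact sup_le_sup_right (sub_le_sub_right h c) 0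

lemma my_inf_add_pp (a b : E) : a ⊓ b + (a - b)⁺ = a := by
  rw [my_pp_def, add_sub, inf_add_sup, add_sub_cancel_right]

lemma my_inf_add_le {a x y : E} (hx : 0 ≤ x) : a ⊓ (x + y) ≤ x + a ⊓ y := by
  rw [add_inf]
  exact le_inf (inf_le_left.trans (le_add_of_nonneg_left hx)) inf_le_right

/-- subadditivity of inf over sums of positives -/
lemma my_SA {t x y : E} (ht : 0 ≤ t) (hx : 0 ≤ x) (hy : 0 ≤ y) :
    t ⊓ (x + y) ≤ t ⊓ x + t ⊓ y := by
  have h1 : t ⊓ (x + y) ≤ (t + t ⊓ y) ⊓ (x + t ⊓ y) :=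
    le_inf (inf_le_left.trans (le_add_of_nonneg_right (le_inf ht hy))) (my_inf_add_le hx)
  calc t ⊓ (x + y) ≤ (t + t ⊓ y) ⊓ (x + t ⊓ y) := h1
    _ = t ⊓ x + t ⊓ y := (inf_add t x (t ⊓ y)).symm

lemma my_DS {a b : E} (ha : 0 ≤ a) (hb : 0 ≤ b) (h : a ⊓ b = 0) (n : ℕ) : a ⊓ n • b = 0 := by
  induction n with
  | zero => simp [inf_eq_right.mpr ha]
  | succ n ih =>
      have h1 : a ⊓ ((n : ℕ) • b + b) ≤ a ⊓ (n • b) + a ⊓ b :=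
        my_SA ha (nsmul_nonneg hb n) hb
      rw [succ_nsmul]
      refine le_antisymm ?_ (le_inf ha (add_nonneg (nsmul_nonneg hb n) hb))
      · rw [ih, h, add_zero] at h1; exact h1

lemma my_DS2 {a b : E} (ha : 0 ≤ a) (hb : 0 ≤ b) (h : a ⊓ b = 0) (m n : ℕ) :
    m • a ⊓ n • b = 0 := by
  rw [inf_comm]
  exact my_DS (nsmul_nonneg hb n) ha (by rw [inf_comm]; exact my_DS ha hb h n) m

/-- infinite distributivity of ⊓ over existing sups -/
lemma my_distlub {ι : Sort*} {f : ι → E} {s : E} (hs : IsLUB (Set.range f) s) (x : E) :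
    IsLUB (Set.range fun i => x ⊓ f i) (x ⊓ s) := by
  constructor
  · rintro _ ⟨i, rfl⟩
    exact inf_le_inf_left x (hs.1 ⟨i, rfl⟩)
  · intro c hc
    have h1 : ∀ i, f i ≤ c + (s - x)⁺ := by
      intro i
      calc f i = f i ⊓ x + (f i - x)⁺ := (my_inf_add_pp _ _).symm
        _ ≤ c + (s - x)⁺ := add_le_add (by rw [inf_comm]; exact hc ⟨i, rfl⟩)
            (my_pp_mono (hs.1 ⟨i, rfl⟩) x)
    have h2 : s ≤ c + (s - x)⁺ := hs.2 (by rintro _ ⟨i, rfl⟩; exact h1 i)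
    have h3 : s ⊓ x = s - (s - x)⁺ := eq_sub_of_add_eq (my_inf_add_pp s x)
    rw [inf_comm, h3]
    exact sub_le_iff_le_add.mpr (by rwa [add_comm] at h2 ⊢)

lemma my_lub_zero {ι : Sort*} {f : ι → E} {s : E} (hs : IsLUB (Set.range f) s)
    (h : ∀ i, f i = 0) (hne : Nonempty ι) : s = 0 := by
  refine le_antisymm (hs.2 ?_) ((h hne.some) ▸ hs.1 ⟨hne.some, rfl⟩)
  rintro _ ⟨i, rfl⟩; exact (h i).le

/-- key inequality : b ⊓ M•(a-b)⁺ ≤ a when 0 ≤ a -/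
lemma my_L {a : E} (b : E) (ha : 0 ≤ a) (M : ℕ) : b ⊓ M • (a - b)⁺ ≤ a := by
  set t := b ⊓ M • (a - b)⁺ with ht
  have h1 : (t - a)⁺ ≤ (b - a)⁺ := my_pp_mono inf_le_left a
  have h2 : (t - a)⁺ ≤ M • (a - b)⁺ := by
    rw [posPart_def]
    exact sup_le ((sub_le_self t ha).trans inf_le_right) (nsmul_nonneg (posPart_nonneg _) M)
  have h3 : (b - a)⁺ ⊓ M • (a - b)⁺ = 0 := by
    have h0 := posPart_inf_negPart_eq_zero (a - b)
    rw [negPart_def, neg_sub, ← posPart_def, inf_comm] at h0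
    exact my_DS (posPart_nonneg _) (posPart_nonneg _) (by rw [inf_comm]; rw [inf_comm] at h0; exact h0) M
  have h4 : (t - a)⁺ = 0 := le_antisymm (le_inf h1 h2 |>.trans h3.le) (posPart_nonneg _)
  have := my_inf_add_pp t a
  rw [h4, add_zero] at this
  rw [← this]; exact inf_le_right

/-- disjointness of remainder for principal projection -/
lemma my_proj_disj {v u p : E} (hu : 0 ≤ u)
    (hp : IsLUB (Set.range fun m : ℕ => v ⊓ m • u) p) : (v - p) ⊓ u = 0 := by
  have hpv : p ≤ v := hp.2 (by rintro _ ⟨m, rfl⟩; exact inf_le_left)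
  set d := (v - p) ⊓ u with hd
  have hd0 : 0 ≤ d := le_inf (sub_nonneg.mpr hpv) hu
  have key : ∀ m : ℕ, v ⊓ m • u + d ≤ p := by
    intro m
    have h1 : v ⊓ m • u + d ≤ v := by
      have h0 : d ≤ v - (v ⊓ m • u) :=
        inf_le_left.trans (sub_le_sub_left (hp.1 ⟨m, rfl⟩) v)
      rw [add_comm]
      exact le_sub_iff_add_le.mp h0
    have h2 : v ⊓ m • u + d ≤ (m + 1) • u := by
      rw [succ_nsmul]
      exact add_le_add inf_le_right inf_le_right
    exact (le_inf h1 h2).trans (hp.1 ⟨m + 1, rfl⟩)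
  have hfin : p ≤ p - d := by
    have h5 : ∀ m : ℕ, v ⊓ m • u ≤ p - d := fun m => le_sub_iff_add_le.mpr (key m)
    exact hp.2 (by rintro _ ⟨m, rfl⟩; exact h5 m)
  exact le_antisymm ((le_sub_self_iff p).mp hfin) hd0

/-- disjointness of remainder for projection onto band generated by increasing family -/
lemma my_proj_family_disj {e : E} {v : ℕ → E} (hv : Monotone v) {p : E}
    (hp : IsLUB (Set.range fun nm : ℕ × ℕ => e ⊓ nm.2 • v nm.1) p) (n₀ : ℕ)
    (hv0 : ∀ n, 0 ≤ v n) (hpe : p ≤ e) : (e - p) ⊓ v n₀ = 0 := by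
  set d := (e - p) ⊓ v n₀ with hd
  have hd0 : 0 ≤ d := le_inf (sub_nonneg.mpr hpe) (hv0 n₀)
  have key : ∀ nm : ℕ × ℕ, e ⊓ nm.2 • v nm.1 + d ≤ p := by
    rintro ⟨n, m⟩
    have h1 : e ⊓ m • v n + d ≤ e := by
      have h0 : d ≤ e - (e ⊓ m • v n) :=
        inf_le_left.trans (sub_le_sub_left (hp.1 ⟨(n, m), rfl⟩) e)
      rw [add_comm]; exact le_sub_iff_add_le.mp h0
    have h2 : e ⊓ m • v n + d ≤ (m + 1) • v (max n n₀) := by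
      rw [succ_nsmul]
      exact add_le_add (inf_le_right.trans (nsmul_le_nsmul_right (hv (le_max_left n n₀)) m))
        (inf_le_right.trans (hv (le_max_right n n₀)))
    exact (le_inf h1 h2).trans (hp.1 ⟨(max n n₀, m + 1), rfl⟩)
  have hfin : p ≤ p - d := hp.2 (by
    rintro _ ⟨nm, rfl⟩; exact le_sub_iff_add_le.mpr (key nm))
  exact le_antisymm ((le_sub_self_iff p).mp hfin) hd0

/-- nsmul of lub of a monotone sequence: upper bound transfer -/
lemma my_smul_lub {f : ℕ → E} {s : E} (hf : Monotone f) (hs : IsLUB (Set.range f) s)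
    (k : ℕ) {C : E} (hC : ∀ m, k • f m ≤ C) : k • s ≤ C := by
  have key : ∀ j : ℕ, j ≤ k → ∀ m : ℕ, j • s + (k - j) • f m ≤ C := by
    intro j
    induction j with
    | zero => intro _ m; simpa using hC m
    | succ j ih =>
        intro hjk m
        have hj : j ≤ k := Nat.le_of_succ_le hjk
        obtain ⟨r, hr⟩ : ∃ r, k - j = r + 1 := ⟨k - j - 1, by omega⟩
        have h1 : ∀ m' : ℕ, f m' ≤ C - (j • s + r • f m) := by
          intro m'
          have h2 : r • f m + f m' ≤ (k - j) • f (max m m') := by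
            rw [hr, succ_nsmul]
            exact add_le_add (nsmul_le_nsmul_right (hf (le_max_left m m')) _)
              (hf (le_max_right m m'))
          have h3 : j • s + (r • f m + f m') ≤ C :=
            (add_le_add_right h2 _).trans (ih hj (max m m'))
          rw [le_sub_iff_add_le, add_comm, add_assoc]
          exact h3
        have h4 : s ≤ C - (j • s + r • f m) :=
          hs.2 (by rintro _ ⟨m', rfl⟩; exact h1 m')
        rw [le_sub_iff_add_le] at h4
        have heq : (j + 1) • s + (k - (j + 1)) • f m = s + (j • s + r • f m) := by
          rw [show k - (j + 1) = r by omega, succ_nsmul]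
          abel
        rw [heq]
        exact h4
  have := key k le_rfl 0
  simpa using this

/-- Archimedean-type: if k • c is bounded then c ≤ 0 (given 0 ≤ c and countable sup) -/
lemma my_arch {c s : E} (hs : IsLUB (Set.range fun k : ℕ => k • c) s) : c ≤ 0 := by
  have h1 : ∀ k : ℕ, k • c ≤ s - c := by
    intro k
    rw [le_sub_iff_add_le, ← succ_nsmul]
    exact hs.1 ⟨k + 1, rfl⟩
  have h2 : s ≤ s - c := hs.2 (by rintro _ ⟨k, rfl⟩; exact h1 k)
  exact (le_sub_self_iff s).mp h2

/-- if t ≤ m • p k for all k, p antitone with glb 0, then t ≤ 0 -/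
lemma my_G {p : ℕ → E} (hanti : Antitone p) (hglb : IsGLB (Set.range p) 0) (m : ℕ) :
    ∀ t : E, 0 ≤ t → (∀ k, t ≤ m • p k) → t ≤ 0 := by
  induction m with
  | zero => intro t _ h; simpa using h 0
  | succ m ih =>
      intro t ht h
      have hp0 : ∀ k, 0 ≤ p k := fun k => hglb.1 ⟨k, rfl⟩
      have key : ∀ k₀, t ≤ p k₀ := by
        intro k₀
        have hbase : ∀ k, k₀ ≤ k → (t - p k₀)⁺ ≤ m • p k := by
          intro k hk
          rw [posPart_def]
          refine sup_le ?_ (nsmul_nonneg (hp0 k) m)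
          calc t - p k₀ ≤ (m + 1) • p k - p k₀ := sub_le_sub_right (h k) _
            _ ≤ (m + 1) • p k - p k := sub_le_sub_left (hanti hk) _
            _ = m • p k := by rw [succ_nsmul]; abel
        have h1 : ∀ k, (t - p k₀)⁺ ≤ m • p k := by
          intro k
          rcases le_or_gt k₀ k with hk | hk
          · exact hbase k hk
          · exact (hbase k₀ le_rfl).trans (nsmul_le_nsmul_right (hanti hk.le) m)
        have h3 : (t - p k₀)⁺ = 0 :=
          le_antisymm (ih _ (posPart_nonneg _) h1) (posPart_nonneg _)
        have h5 := my_inf_add_pp t (p k₀)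
        rw [h3, add_zero] at h5
        rw [← h5]; exact inf_le_right
      exact hglb.2 (by rintro _ ⟨k, rfl⟩; exact key k)

/-- v lies in the band generated by u -/
def MyInBand (u v : E) : Prop := IsLUB (Set.range fun m : ℕ => v ⊓ m • u) v

lemma my_band_of_le {u v : E} (hv : 0 ≤ v) (hvu : v ≤ u) : MyInBand u v := by
  constructor
  · rintro _ ⟨m, rfl⟩; exact inf_le_left
  · intro c hc
    have := hc ⟨1, rfl⟩
    simpa [one_nsmul, inf_eq_left.mpr hvu] using this

lemma my_band_add {u a b : E} (ha : MyInBand u a) (hb : MyInBand u b) :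
    MyInBand u (a + b) := by
  constructor
  · rintro _ ⟨m, rfl⟩; exact inf_le_left
  · intro c hc
    have key : ∀ m m' : ℕ, a ⊓ m • u + b ⊓ m' • u ≤ c := by
      intro m m'
      have step : a ⊓ m • u + b ⊓ m' • u ≤ (a + b) ⊓ ((m + m') • u) :=
        le_inf (add_le_add inf_le_left inf_le_left)
          (by rw [add_nsmul]; exact add_le_add inf_le_right inf_le_right)
      exact step.trans (hc ⟨m + m', rfl⟩)
    have h1 : ∀ m' : ℕ, b ⊓ m' • u ≤ c - a := by
      intro m'
      rw [le_sub_iff_add_le, add_comm]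
      have h2 : ∀ m : ℕ, a ⊓ m • u ≤ c - (b ⊓ m' • u) := fun m =>
        le_sub_iff_add_le.mpr (key m m')
      have := ha.2 (by rintro _ ⟨m, rfl⟩; exact h2 m)
      rwa [le_sub_iff_add_le] at this
    have := hb.2 (by rintro _ ⟨m', rfl⟩; exact h1 m')
    rw [le_sub_iff_add_le, add_comm] at this
    exact this

lemma my_band_mono {u a b : E} (hab : a ≤ b) (hb : MyInBand u b) : MyInBand u a := by
  constructor
  · rintro _ ⟨m, rfl⟩; exact inf_le_left
  · intro c hc
    have h1 : ∀ m : ℕ, b ⊓ m • u ≤ b - a + c := by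
      intro m
      have e1 : (a - m • u)⁺ = a - a ⊓ m • u :=
        eq_sub_of_add_eq (by rw [add_comm]; exact my_inf_add_pp a (m • u))
      have e2 : (b - m • u)⁺ = b - b ⊓ m • u :=
        eq_sub_of_add_eq (by rw [add_comm]; exact my_inf_add_pp b (m • u))
      have h2 : a - a ⊓ m • u ≤ b - b ⊓ m • u := by
        rw [← e1, ← e2]; exact my_pp_mono hab _
      have h3 : b ⊓ m • u ≤ b - a + a ⊓ m • u := by
        have h4 := add_le_add_left h2 (a ⊓ m • u + b ⊓ m • u)
        calc b ⊓ m • u = a - a ⊓ m • u + (a ⊓ m • u + b ⊓ m • u) - a := by abel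
          _ ≤ b - b ⊓ m • u + (a ⊓ m • u + b ⊓ m • u) - a := sub_le_sub_right h4 a
          _ = b - a + a ⊓ m • u := by abel
      exact h3.trans (add_le_add_right (hc ⟨m, rfl⟩) _)
    have h5 : b ≤ b - a + c := hb.2 (by rintro _ ⟨m, rfl⟩; exact h1 m)
    calc a = b - (b - a) := by abel
      _ ≤ b - a + c - (b - a) := sub_le_sub_right h5 _
      _ = c := by abel

lemma my_band_proj {w y p : E} (hp : IsLUB (Set.range fun m : ℕ => y ⊓ m • w) p) :
    MyInBand w p := by
  constructor
  · rintro _ ⟨m, rfl⟩; exact inf_le_left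
  · intro c hc
    refine hp.2 ?_
    rintro _ ⟨m, rfl⟩
    exact le_trans (le_inf (hp.1 ⟨m, rfl⟩) inf_le_right) (hc ⟨m, rfl⟩)

lemma my_band_trans {u v t s : E} (hu : 0 ≤ u) (hv : 0 ≤ v) (ht : 0 ≤ t) (h1 : MyInBand u v)
    (h2 : MyInBand v t) (hs : IsLUB (Set.range fun m : ℕ => t ⊓ m • u) s) :
    MyInBand u t := by
  have hst : s ≤ t := hs.2 (by rintro _ ⟨m, rfl⟩; exact inf_le_left)
  have hs0 : 0 ≤ s := by
    have := hs.1 ⟨0, rfl⟩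
    simpa [inf_eq_right.mpr ht] using this
  set a := t - s with hadef
  have ha0 : 0 ≤ a := sub_nonneg.mpr hst
  have hau : a ⊓ u = 0 := my_proj_disj hu hs
  have hav : a ⊓ v = 0 := by
    have hd := my_distlub h1 a
    refine my_lub_zero hd (fun m => ?_) ⟨0⟩
    refine le_antisymm ?_ (le_inf ha0 (le_inf hv (nsmul_nonneg hu m)))
    calc a ⊓ (v ⊓ m • u) ≤ a ⊓ m • u := inf_le_inf_left a inf_le_right
      _ = 0 := my_DS ha0 hu hau m
  have hat : a ⊓ t = 0 := by
    have hd := my_distlub h2 a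
    refine my_lub_zero hd (fun m => ?_) ⟨0⟩
    refine le_antisymm ?_ (le_inf ha0 (le_inf ht (nsmul_nonneg hv m)))
    calc a ⊓ (t ⊓ m • v) ≤ a ⊓ m • v := inf_le_inf_left a inf_le_right
      _ = 0 := my_DS ha0 hv hav m
  have hts : t = s := by
    have ha' : a = 0 := by
      have h6 : a = a ⊓ t := (inf_eq_left.mpr (hadef ▸ sub_le_self t hs0)).symm
      rw [h6, hat]
    exact sub_eq_zero.mp ha'
  rw [MyInBand, hts]
  rw [hts] at hs
  exact hs

lemma my_pp_mono' {a b : E} (h : a ≤ b) : a⁺ ≤ b⁺ := by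
  rw [posPart_def, posPart_def]; exact sup_le_sup_right h 0

lemma my_SA_sum {t : E} (ht : 0 ≤ t) (f : ℕ → E) (hf : ∀ j, 0 ≤ f j) (K : ℕ) :
    t ⊓ (∑ j ∈ Finset.range K, f j) ≤ ∑ j ∈ Finset.range K, t ⊓ f j := by
  induction K with
  | zero => simpa using inf_le_right
  | succ K ih =>
      rw [Finset.sum_range_succ, Finset.sum_range_succ]
      calc t ⊓ (∑ j ∈ Finset.range K, f j + f K)
          ≤ t ⊓ (∑ j ∈ Finset.range K, f j) + t ⊓ f K :=
            my_SA ht (Finset.sum_nonneg fun j _ => hf j) (hf K)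
        _ ≤ ∑ j ∈ Finset.range K, t ⊓ f j + t ⊓ f K := add_le_add_left ih _

lemma my_sum_ite_le {N : ℕ} {g t : ℕ → E} (hg : ∀ j, 0 ≤ g j)
    (ht : ∀ j, t j ≤ if j < N then g j else 0) (n : ℕ) :
    ∑ j ∈ Finset.range n, t j ≤ ∑ j ∈ Finset.range N, g j := by
  calc ∑ j ∈ Finset.range n, t j ≤ ∑ j ∈ Finset.range n, (if j < N then g j else 0) :=
        Finset.sum_le_sum fun j _ => ht j
    _ = ∑ j ∈ (Finset.range n).filter (· < N), g j := by rw [Finset.sum_filter]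
    _ ≤ ∑ j ∈ Finset.range N, g j := by
        apply Finset.sum_le_sum_of_subset_of_nonneg
        · intro j hj; simp only [Finset.mem_filter, Finset.mem_range] at hj ⊢; exact hj.2
        · intro j _ _; exact hg j

end Helpers

/-- Main lemma: a positive uo-null sequence in a Dedekind σ-complete and laterally
σ-complete vector lattice is order bounded. -/
lemma my_uo_bounded {E : Type*} [Lattice E] [AddCommGroup E]
    [CovariantClass E E (· + ·) (· ≤ ·)]
    (hDed : ∀ x : ℕ → E, (∃ b, ∀ n, x n ≤ b) → ∃ s, IsLUB (Set.range x) s)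
    (hLat : ∀ x : ℕ → E, (∀ n, 0 ≤ x n) → (∀ n m, n ≠ m → x n ⊓ x m = 0) →
      ∃ s, IsLUB (Set.range x) s)
    (y : ℕ → E) (hy0 : ∀ n, 0 ≤ y n)
    (huo : ∀ u : E, 0 ≤ u → OConvZero (fun n => y n ⊓ u)) :
    ∃ b, ∀ n, y n ≤ b := by
  classical
  letI : IsOrderedAddMonoid E :=
    { add_le_add_left := fun a b h c => by rw [add_comm a c, add_comm b c]; exact add_le_add_right h c }
  -- principal band projections
  set P : E → E → E := fun u v => (hDed (fun m => v ⊓ m • u) ⟨v, fun _ => inf_le_left⟩).choose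
    with hPdef
  have hP : ∀ u v : E, IsLUB (Set.range fun m : ℕ => v ⊓ m • u) (P u v) := fun u v =>
    (hDed (fun m => v ⊓ m • u) ⟨v, fun _ => inf_le_left⟩).choose_spec
  have hPle : ∀ u v : E, P u v ≤ v := fun u v =>
    (hP u v).2 (by rintro _ ⟨m, rfl⟩; exact inf_le_left)
  have hP0 : ∀ u v : E, 0 ≤ v → 0 ≤ P u v := by
    intro u v hv
    have := (hP u v).1 ⟨0, rfl⟩
    simpa [inf_eq_right.mpr hv] using this
  -- running maxima
  set w : ℕ → E := fun n => Nat.rec (y 0) (fun k wk => wk ⊔ y (k + 1)) n with hwdef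
  have hwsucc : ∀ n, w (n + 1) = w n ⊔ y (n + 1) := fun n => rfl
  have hw0 : ∀ n, 0 ≤ w n := by
    intro n; induction n with
    | zero => exact hy0 0
    | succ n ih => exact ih.trans (by rw [hwsucc]; exact le_sup_left)
  have hwmono : Monotone w :=
    monotone_nat_of_le_succ fun n => by rw [hwsucc]; exact le_sup_left
  have hyw : ∀ j n, j ≤ n → y j ≤ w n := by
    intro j n hjn
    induction n with
    | zero => simp only [Nat.le_zero] at hjn; subst hjn; exact le_rfl
    | succ n ih =>
        rcases Nat.lt_or_ge j (n + 1) with h | h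
        · exact (ih (Nat.lt_succ_iff.mp h)).trans (by rw [hwsucc]; exact le_sup_left)
        · have : j = n + 1 := le_antisymm hjn h
          subst this; rw [hwsucc]; exact le_sup_right
  have hwsum : ∀ n, w n ≤ ∑ j ∈ Finset.range (n + 1), y j := by
    intro n
    induction n with
    | zero => rw [Finset.sum_range_one]; exact le_rfl
    | succ n ih =>
        rw [hwsucc, Finset.sum_range_succ]
        exact sup_le (ih.trans (le_add_of_nonneg_right (hy0 (n + 1))))
          (le_add_of_nonneg_left (Finset.sum_nonneg fun j _ => hy0 j))
  -- disjointification
  set e' : ℕ → E := fun n => Nat.casesOn n (y 0) (fun k => y (k + 1) - P (w k) (y (k + 1)))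
    with he'def
  have he'y : ∀ n, e' n ≤ y n := by
    intro n; cases n with
    | zero => exact le_rfl
    | succ k => exact sub_le_self _ (hP0 _ _ (hy0 (k + 1)))
  have he'0 : ∀ n, 0 ≤ e' n := by
    intro n; cases n with
    | zero => exact hy0 0
    | succ k => exact sub_nonneg.mpr (hPle _ _)
  have he'w : ∀ k, e' (k + 1) ⊓ w k = 0 := fun k =>
    my_proj_disj (hw0 k) (hP (w k) (y (k + 1)))
  have he'disj : ∀ n m, n ≠ m → e' n ⊓ e' m = 0 := by
    have key : ∀ m n, m < n → e' n ⊓ e' m = 0 := by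
      intro m n hmn
      obtain ⟨k, rfl⟩ : ∃ k, n = k + 1 := ⟨n - 1, by omega⟩
      refine le_antisymm ?_ (le_inf (he'0 (k + 1)) (he'0 m))
      calc e' (k + 1) ⊓ e' m ≤ e' (k + 1) ⊓ w k :=
            inf_le_inf_left _ ((he'y m).trans (hyw m k (by omega)))
        _ = 0 := he'w k
    intro n m hnm
    rcases Nat.lt_or_ge n m with h | h
    · rw [inf_comm]; exact key n m h
    · exact key m n (by omega)
  obtain ⟨e, he⟩ := hLat e' he'0 he'disj
  have he0 : 0 ≤ e := (he'0 0).trans (he.1 ⟨0, rfl⟩)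
  -- every y n is in the band generated by e
  have hband : ∀ n, MyInBand e (y n) := by
    intro n
    induction n using Nat.strong_induction_on with
    | _ n ih =>
      match n with
      | 0 => exact my_band_of_le (hy0 0) (he.1 ⟨0, rfl⟩)
      | (k + 1) =>
          have hq := hP (w k) (y (k + 1))
          have hq0 : 0 ≤ P (w k) (y (k + 1)) := hP0 _ _ (hy0 (k + 1))
          have hsum : MyInBand e (∑ j ∈ Finset.range (k + 1), y j) := by
            have : ∀ K, K ≤ k + 1 → MyInBand e (∑ j ∈ Finset.range K, y j) := by
              intro K
              induction K with
              | zero => intro _; simpa using my_band_of_le le_rfl he0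
              | succ K ihK =>
                  intro hK
                  rw [Finset.sum_range_succ]
                  exact my_band_add (ihK (by omega)) (ih K (by omega))
            exact this (k + 1) le_rfl
          have hw_band : MyInBand e (w k) := my_band_mono (hwsum k) hsum
          have hq_band : MyInBand e (P (w k) (y (k + 1))) :=
            my_band_trans he0 (hw0 k) hq0 hw_band (my_band_proj hq) (hP e _)
          have hfin : MyInBand e (e' (k + 1) + P (w k) (y (k + 1))) :=
            my_band_add (my_band_of_le (he'0 (k + 1)) (he.1 ⟨k + 1, rfl⟩)) hq_band
          have : e' (k + 1) + P (w k) (y (k + 1)) = y (k + 1) := sub_add_cancel _ _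
          rwa [this] at hfin
  -- exhaustion bands
  set v : ℕ → ℕ → E := fun k n => (w n - k • e)⁺ with hvdef
  have hv0 : ∀ k n, 0 ≤ v k n := fun k n => posPart_nonneg _
  have hvmono : ∀ k, Monotone (v k) := fun k _ _ h => my_pp_mono (hwmono h) _
  have hvanti : ∀ k n, v (k + 1) n ≤ v k n := fun k n =>
    my_pp_mono' (sub_le_sub_left (nsmul_le_nsmul_left he0 (Nat.le_succ k)) _)
  have hpex : ∀ k : ℕ, ∃ p, IsLUB (Set.range fun nm : ℕ × ℕ => e ⊓ nm.2 • v k nm.1) p := by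
    intro k
    obtain ⟨p, hp⟩ := hDed
      ((fun nm : ℕ × ℕ => e ⊓ nm.2 • v k nm.1) ∘ (Denumerable.eqv (ℕ × ℕ)).symm)
      ⟨e, fun _ => inf_le_left⟩
    rw [(Denumerable.eqv (ℕ × ℕ)).symm.surjective.range_comp] at hp
    exact ⟨p, hp⟩
  choose p hp using hpex
  have hpe : ∀ k, p k ≤ e := fun k => (hp k).2 (by rintro _ ⟨nm, rfl⟩; exact inf_le_left)
  have hp0 : ∀ k, 0 ≤ p k := by
    intro k
    have := (hp k).1 ⟨(0, 0), rfl⟩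
    simpa [inf_eq_right.mpr he0] using this
  have hpanti : Antitone p := by
    apply antitone_nat_of_succ_le
    intro k
    refine (hp (k + 1)).2 ?_
    rintro _ ⟨⟨n, m⟩, rfl⟩
    exact le_trans (inf_le_inf_left e (nsmul_le_nsmul_right (hvanti k n) m)) ((hp k).1 ⟨(n, m), rfl⟩)
  have hrv : ∀ k n, (e - p k) ⊓ v k n = 0 := fun k n =>
    my_proj_family_disj (hvmono k) (hp k) n (hv0 k) (hpe k)
  have hr0 : ∀ k, 0 ≤ e - p k := fun k => sub_nonneg.mpr (hpe k)
  have hrp : ∀ k, (e - p k) ⊓ p k = 0 := by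
    intro k
    refine my_lub_zero (my_distlub (hp k) (e - p k)) (fun nm => ?_) ⟨(0, 0)⟩
    refine le_antisymm ?_ (le_inf (hr0 k) (le_inf he0 (nsmul_nonneg (hv0 k nm.1) nm.2)))
    calc (e - p k) ⊓ (e ⊓ nm.2 • v k nm.1) ≤ (e - p k) ⊓ nm.2 • v k nm.1 :=
          inf_le_inf_left _ inf_le_right
      _ = 0 := my_DS (hr0 k) (hv0 k nm.1) (hrv k nm.1) nm.2
  -- the key: inf of the p k is zero
  have hglb : IsGLB (Set.range p) 0 := by
    constructor
    · rintro _ ⟨k, rfl⟩; exact hp0 k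
    · intro c hc
      have hcp : ∀ k, c ≤ p k := fun k => hc ⟨k, rfl⟩
      set g := c ⊔ 0 with hgdef
      have hg : ∀ k, g ≤ p k := fun k => sup_le (hcp k) (hp0 k)
      have hg0 : (0:E) ≤ g := le_sup_right
      have hge : g ≤ e := (hg 0).trans (hpe 0)
      obtain ⟨κ, hne, hpre, hdir, z, hzanti, hzglb, hzdom⟩ := huo e he0
      have hgz : ∀ β : κ, g ≤ z β := by
        intro β
        have hzb0 : (0:E) ≤ z β := hzglb.1 ⟨β, rfl⟩
        obtain ⟨N, hN⟩ := hzdom β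
        have hN' : ∀ a, N ≤ a → y a ⊓ e ≤ z β := by
          intro a ha
          have h0 := hN a ha
          rwa [abs_of_nonneg (le_inf (hy0 a) he0)] at h0
        set c' := (g - z β)⁺ with hc'def
        have hc'0 : (0:E) ≤ c' := posPart_nonneg _
        have hc'g : c' ≤ g := by
          rw [hc'def, posPart_def]; exact sup_le (sub_le_self g hzb0) hg0
        have hc'e : c' ≤ e := hc'g.trans hge
        have hc'p : ∀ k, c' ≤ p k := fun k => hc'g.trans (hg k)
        have hdisjN : ∀ j, N ≤ j → c' ⊓ (y j - e)⁺ = 0 := by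
          intro j hj
          have h8 : (e - y j)⁺ = e - e ⊓ y j :=
            eq_sub_of_add_eq (by rw [add_comm]; exact my_inf_add_pp e (y j))
          have h7 : e - z β ≤ (e - y j)⁺ := by
            rw [h8]
            have h0 := sub_le_sub_left (hN' j hj) e
            rwa [inf_comm (y j) e] at h0
          have h9 : c' ≤ (e - y j)⁺ := by
            have h0 : c' ≤ (e - z β)⁺ := my_pp_mono hge _
            refine h0.trans ?_
            rw [posPart_def]
            exact sup_le h7 (posPart_nonneg _)
          have h10 : (e - y j)⁺ ⊓ (y j - e)⁺ = 0 := by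
            have h0 := posPart_inf_negPart_eq_zero (y j - e)
            rwa [negPart_def, neg_sub, ← posPart_def, inf_comm] at h0
          refine le_antisymm ?_ (le_inf hc'0 (posPart_nonneg _))
          exact (inf_le_inf_right _ h9).trans h10.le
        have hmain : ∀ k, 1 ≤ k → k • c' ≤ ∑ j ∈ Finset.range N, y j := by
          intro k hk
          have hπ0 : ∀ j : ℕ, 0 ≤ P ((y j - k • e)⁺) c' := fun j => hP0 _ _ hc'0
          have hπy : ∀ j, k • P ((y j - k • e)⁺) c' ≤ y j := by
            intro j
            refine my_smul_lub (fun m m' hm =>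
              inf_le_inf_left _ (nsmul_le_nsmul_left (posPart_nonneg _) hm)) (hP _ c') k ?_
            intro m
            have h11 : k • (c' ⊓ m • (y j - k • e)⁺) ≤ (k • e) ⊓ ((k * m) • (y j - k • e)⁺) := by
              refine le_inf ?_ ?_
              · exact (nsmul_le_nsmul_right inf_le_left k).trans (nsmul_le_nsmul_right hc'e k)
              · rw [mul_comm k m, mul_nsmul]
                exact nsmul_le_nsmul_right inf_le_right k
            exact h11.trans (my_L (k • e) (hy0 j) (k * m))
          have hvsum : ∀ n, v k n ≤ ∑ j ∈ Finset.range (n + 1), (y j - k • e)⁺ := by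
            intro n
            induction n with
            | zero => rw [Finset.sum_range_one]; exact le_rfl
            | succ n ih =>
                rw [Finset.sum_range_succ]
                have h0 : v k (n + 1) = v k n ⊔ (y (n + 1) - k • e)⁺ := by
                  show (w (n + 1) - k • e)⁺ = (w n - k • e)⁺ ⊔ (y (n + 1) - k • e)⁺
                  rw [hwsucc n, posPart_def, posPart_def, posPart_def, sup_sub,
                    sup_sup_distrib_right]
                rw [h0]
                exact sup_le (ih.trans (le_add_of_nonneg_right (posPart_nonneg _)))
                  (le_add_of_nonneg_left (Finset.sum_nonneg fun j _ => posPart_nonneg _))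
          have hsumπ : c' ≤ ∑ j ∈ Finset.range N, P ((y j - k • e)⁺) c' := by
            have hd := my_distlub (hp k) c'
            have hub : ∀ nm : ℕ × ℕ,
                c' ⊓ (e ⊓ nm.2 • v k nm.1) ≤ ∑ j ∈ Finset.range N, P ((y j - k • e)⁺) c' := by
              rintro ⟨n, m⟩
              have t2 : m • v k n ≤ ∑ j ∈ Finset.range (n + 1), m • (y j - k • e)⁺ := by
                rw [← Finset.smul_sum]; exact nsmul_le_nsmul_right (hvsum n) m
              have t3 : c' ⊓ (m • v k n) ≤ ∑ j ∈ Finset.range (n + 1), c' ⊓ m • (y j - k • e)⁺ :=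
                (inf_le_inf_left _ t2).trans
                  (my_SA_sum hc'0 _ (fun j => nsmul_nonneg (posPart_nonneg _) m) (n + 1))
              have t4 : ∀ j, c' ⊓ m • (y j - k • e)⁺ ≤
                  (if j < N then P ((y j - k • e)⁺) c' else 0) := by
                intro j
                by_cases hj : j < N
                · simpa [hj] using (hP ((y j - k • e)⁺) c').1 ⟨m, rfl⟩
                · push_neg at hj
                  simp only [Nat.not_lt_of_le hj, if_false]
                  have d1 : (y j - k • e)⁺ ≤ (y j - e)⁺ :=
                    my_pp_mono' (sub_le_sub_left (by
                      simpa using nsmul_le_nsmul_left he0 hk) _)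
                  calc c' ⊓ m • (y j - k • e)⁺ ≤ c' ⊓ m • (y j - e)⁺ :=
                        inf_le_inf_left _ (nsmul_le_nsmul_right d1 m)
                    _ = 0 := my_DS hc'0 (posPart_nonneg _) (hdisjN j hj) m
              calc c' ⊓ (e ⊓ m • v k n)
                  ≤ ∑ j ∈ Finset.range (n + 1), c' ⊓ m • (y j - k • e)⁺ :=
                    (inf_le_inf_left _ inf_le_right).trans t3
                _ ≤ ∑ j ∈ Finset.range N, P ((y j - k • e)⁺) c' :=
                    my_sum_ite_le hπ0 t4 (n + 1)
            have h12 : c' ⊓ p k ≤ ∑ j ∈ Finset.range N, P ((y j - k • e)⁺) c' :=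
              hd.2 (by rintro _ ⟨nm, rfl⟩; exact hub nm)
            rwa [inf_eq_left.mpr (hc'p k)] at h12
          calc k • c' ≤ k • ∑ j ∈ Finset.range N, P ((y j - k • e)⁺) c' :=
                nsmul_le_nsmul_right hsumπ k
            _ = ∑ j ∈ Finset.range N, k • P ((y j - k • e)⁺) c' := Finset.smul_sum
            _ ≤ ∑ j ∈ Finset.range N, y j := Finset.sum_le_sum fun j _ => hπy j
        obtain ⟨s, hs⟩ := hDed (fun k : ℕ => k • c')
          ⟨∑ j ∈ Finset.range N, y j, by
            intro k
            rcases Nat.eq_zero_or_pos k with rfl | hk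
            · simpa using Finset.sum_nonneg fun j _ => hy0 j
            · exact hmain k hk⟩
        have hc'le : c' ≤ 0 := my_arch hs
        have h13 : g - z β ≤ 0 := (le_posPart _).trans hc'le
        exact sub_nonpos.mp h13
      have h14 : g ≤ 0 := hzglb.2 (by rintro _ ⟨β, rfl⟩; exact hgz β)
      exact le_sup_left.trans h14
  -- increments of the components
  set d : ℕ → E := fun k => p k - p (k + 1) with hddef
  have hd0 : ∀ k, 0 ≤ d k := fun k => sub_nonneg.mpr (hpanti (Nat.le_succ k))
  have hdr : ∀ k, d k ≤ e - p (k + 1) := fun k => sub_le_sub_right (hpe k) _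
  have hdp : ∀ k, d k ≤ p k := fun k => sub_le_self _ (hp0 (k + 1))
  have hdd : ∀ k j, k ≠ j → d k ⊓ d j = 0 := by
    have key : ∀ k j, k < j → d k ⊓ d j = 0 := by
      intro k j hkj
      refine le_antisymm ?_ (le_inf (hd0 k) (hd0 j))
      calc d k ⊓ d j ≤ (e - p (k + 1)) ⊓ p (k + 1) :=
            inf_le_inf (hdr k) ((hdp j).trans (hpanti hkj))
        _ = 0 := hrp (k + 1)
    intro k j hkj
    rcases Nat.lt_or_ge k j with h | h
    · exact key k j h
    · rw [inf_comm]; exact key j k (by omega)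
  have hcomp : ∀ k, d k ⊓ (e - d k) = 0 := by
    intro k
    have hed0 : 0 ≤ e - d k := sub_nonneg.mpr ((hdp k).trans (hpe k))
    have he_split : e - d k = p (k + 1) + (e - p k) := by
      show e - (p k - p (k + 1)) = p (k + 1) + (e - p k)
      abel
    rw [he_split]
    refine le_antisymm ?_ (le_inf (hd0 k) (by rw [← he_split]; exact hed0))
    calc d k ⊓ (p (k + 1) + (e - p k)) ≤ d k ⊓ p (k + 1) + d k ⊓ (e - p k) :=
          my_SA (hd0 k) (hp0 (k + 1)) (hr0 k)
      _ ≤ (e - p (k + 1)) ⊓ p (k + 1) + p k ⊓ (e - p k) :=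
          add_le_add (inf_le_inf_right _ (hdr k)) (inf_le_inf_right _ (hdp k))
      _ = 0 := by rw [hrp (k + 1), inf_comm (p k) (e - p k), hrp k, add_zero]
  obtain ⟨b₁, hb₁⟩ := hLat (fun k => (k + 1) • d k)
    (fun k => nsmul_nonneg (hd0 k) _)
    (fun k j hkj => my_DS2 (hd0 k) (hd0 j) (hdd k j hkj) _ _)
  set S : ℕ → E := fun K => ∑ k ∈ Finset.range K, (k + 1) • d k with hSdef
  have hS0 : ∀ K, 0 ≤ S K := fun K => Finset.sum_nonneg fun k _ => nsmul_nonneg (hd0 k) _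
  have hSsucc : ∀ K, S (K + 1) = S K + (K + 1) • d K := by
    intro K
    show ∑ k ∈ Finset.range (K + 1), (k + 1) • d k = _
    rw [Finset.sum_range_succ]
  have hSb : ∀ K, S K ≤ b₁ := by
    intro K
    induction K with
    | zero =>
        have hb0 : (0:E) ≤ b₁ := le_trans (nsmul_nonneg (hd0 0) 1) (hb₁.1 ⟨0, rfl⟩)
        have : S 0 = 0 := by show ∑ k ∈ Finset.range 0, (k + 1) • d k = 0; simp
        rw [this]; exact hb0
    | succ K ih =>
        have hdisjS : S K ⊓ (K + 1) • d K = 0 := by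
          refine le_antisymm ?_ (le_inf (hS0 K) (nsmul_nonneg (hd0 K) _))
          calc S K ⊓ (K + 1) • d K = (K + 1) • d K ⊓ S K := inf_comm _ _
            _ ≤ ∑ k ∈ Finset.range K, ((K + 1) • d K ⊓ (k + 1) • d k) :=
                my_SA_sum (nsmul_nonneg (hd0 K) _) _ (fun k => nsmul_nonneg (hd0 k) _) K
            _ ≤ 0 := le_of_eq (Finset.sum_eq_zero fun k hk =>
                my_DS2 (hd0 K) (hd0 k) (hdd K k (by
                  have := Finset.mem_range.mp hk; omega)) _ _)
        have hsum_eq : S (K + 1) = S K ⊔ (K + 1) • d K := by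
          rw [hSsucc, ← inf_add_sup, hdisjS, zero_add]
        rw [hsum_eq]
        exact sup_le ih (hb₁.1 ⟨K, rfl⟩)
  have hlocal : ∀ n m k : ℕ, w n ⊓ m • d k ≤ (k + 1) • d k := by
    intro n m k
    have h1 : w n ⊓ m • d k ≤ (k + 1) • e := by
      have hsplit : w n ⊓ ((k + 1) • e) + v (k + 1) n = w n :=
        my_inf_add_pp (w n) ((k + 1) • e)
      have hvd : v (k + 1) n ⊓ m • d k = 0 := by
        refine le_antisymm ?_ (le_inf (hv0 (k + 1) n) (nsmul_nonneg (hd0 k) m))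
        calc v (k + 1) n ⊓ m • d k ≤ v (k + 1) n ⊓ m • (e - p (k + 1)) :=
              inf_le_inf_left _ (nsmul_le_nsmul_right (hdr k) m)
          _ = 0 := my_DS (hv0 _ _) (hr0 (k + 1)) (by rw [inf_comm]; exact hrv (k + 1) n) m
      calc w n ⊓ m • d k = m • d k ⊓ w n := inf_comm _ _
        _ = m • d k ⊓ (w n ⊓ ((k + 1) • e) + v (k + 1) n) := by rw [hsplit]
        _ ≤ m • d k ⊓ (w n ⊓ ((k + 1) • e)) + m • d k ⊓ v (k + 1) n :=
              my_SA (nsmul_nonneg (hd0 k) m) (le_inf (hw0 n) (nsmul_nonneg he0 _)) (hv0 _ _)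
        _ ≤ (k + 1) • e + 0 :=
              add_le_add (inf_le_right.trans inf_le_right)
                (le_of_eq (by rw [inf_comm]; exact hvd))
        _ = (k + 1) • e := add_zero _
    have h2 : (k + 1) • d k + (k + 1) • (e - d k) = (k + 1) • e := by
      rw [← nsmul_add, add_sub_cancel]
    calc w n ⊓ m • d k ≤ (m • d k) ⊓ ((k + 1) • e) := le_inf inf_le_right h1
      _ = (m • d k) ⊓ ((k + 1) • d k + (k + 1) • (e - d k)) := by rw [h2]
      _ ≤ (k + 1) • d k + (m • d k) ⊓ ((k + 1) • (e - d k)) :=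
            my_inf_add_le (nsmul_nonneg (hd0 k) _)
      _ = (k + 1) • d k := by
            rw [my_DS2 (hd0 k) (sub_nonneg.mpr ((hdp k).trans (hpe k))) (hcomp k) m (k + 1),
              add_zero]
  have hstep : ∀ n m K : ℕ, w n ⊓ m • e ≤ S K + w n ⊓ m • p K := by
    intro n m K
    induction K with
    | zero =>
        have hesplit : m • (e - p 0) + m • p 0 = m • e := by rw [← nsmul_add, sub_add_cancel]
        have hwr0 : w n ⊓ m • (e - p 0) = 0 := by
          have hv00 : v 0 n = w n := by
            show (w n - 0 • e)⁺ = w n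
            rw [zero_nsmul, sub_zero]
            exact posPart_of_nonneg (hw0 n)
          have h0 : (e - p 0) ⊓ w n = 0 := by rw [← hv00]; exact hrv 0 n
          exact my_DS (hw0 n) (hr0 0) (by rw [inf_comm]; exact h0) m
        have hS0eq : S 0 = 0 := by show ∑ k ∈ Finset.range 0, (k + 1) • d k = 0; simp
        calc w n ⊓ m • e = w n ⊓ (m • (e - p 0) + m • p 0) := by rw [hesplit]
          _ ≤ w n ⊓ m • (e - p 0) + w n ⊓ m • p 0 :=
              my_SA (hw0 n) (nsmul_nonneg (hr0 0) m) (nsmul_nonneg (hp0 0) m)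
          _ = S 0 + w n ⊓ m • p 0 := by rw [hwr0, hS0eq]
    | succ K ih =>
        have hdpk : d K + p (K + 1) = p K := by
          show p K - p (K + 1) + p (K + 1) = p K
          abel
        have hpsplit : m • d K + m • p (K + 1) = m • p K := by
          rw [← nsmul_add, hdpk]
        have h3 : w n ⊓ m • p K ≤ (K + 1) • d K + w n ⊓ m • p (K + 1) := by
          calc w n ⊓ m • p K = w n ⊓ (m • d K + m • p (K + 1)) := by rw [hpsplit]
            _ ≤ w n ⊓ m • d K + w n ⊓ m • p (K + 1) :=
                my_SA (hw0 n) (nsmul_nonneg (hd0 K) m) (nsmul_nonneg (hp0 (K + 1)) m)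
            _ ≤ (K + 1) • d K + w n ⊓ m • p (K + 1) := add_le_add_left (hlocal n m K) _
        calc w n ⊓ m • e ≤ S K + w n ⊓ m • p K := ih
          _ ≤ S K + ((K + 1) • d K + w n ⊓ m • p (K + 1)) := add_le_add_right h3 _
          _ = S (K + 1) + w n ⊓ m • p (K + 1) := by rw [hSsucc]; abel
  have hwb : ∀ n m : ℕ, w n ⊓ m • e ≤ b₁ := by
    intro n m
    have hq : ∀ K, (w n ⊓ m • e - b₁)⁺ ≤ m • p K := by
      intro K
      rw [posPart_def]
      refine sup_le ?_ (nsmul_nonneg (hp0 K) m)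
      calc w n ⊓ m • e - b₁ ≤ S K + w n ⊓ m • p K - b₁ := sub_le_sub_right (hstep n m K) _
        _ ≤ b₁ + w n ⊓ m • p K - b₁ := sub_le_sub_right (add_le_add_left (hSb K) _) _
        _ = w n ⊓ m • p K := by abel
        _ ≤ m • p K := inf_le_right
    have h5 : (w n ⊓ m • e - b₁)⁺ ≤ 0 := my_G hpanti hglb m _ (posPart_nonneg _) hq
    have h6 : w n ⊓ m • e - b₁ ≤ 0 := (le_posPart _).trans h5
    exact sub_nonpos.mp h6
  refine ⟨b₁, fun n => ?_⟩
  refine (hband n).2 ?_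
  rintro _ ⟨m, rfl⟩
  exact (inf_le_inf_right _ (hyw n n le_rfl)).trans (hwb n m)

/-- if E is Dedekind σ-complete and laterally σ-complete, then every
σ-order-to-norm continuous operator into a normed lattice is σ-uon-continuous. -/
theorem sigmaOrderToNorm_of_laterally_complete
    {E F : Type*} [Lattice E] [AddCommGroup E] [Module ℝ E]
    [CovariantClass E E (· + ·) (· ≤ ·)]
    [NormedAddCommGroup F] [Lattice F] [HasSolidNorm F] [IsOrderedAddMonoid F] [Module ℝ F]
    (hDed : ∀ x : ℕ → E, (∃ b, ∀ n, x n ≤ b) → ∃ s, IsLUB (Set.range x) s)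
    (hLat : ∀ x : ℕ → E, (∀ n, 0 ≤ x n) → (∀ n m, n ≠ m → x n ⊓ x m = 0) →
      ∃ s, IsLUB (Set.range x) s)
    (T : E →ₗ[ℝ] F) (hT : SigmaOrderToNormContinuous T) :
    SigmaUonContinuous T := by
  intro x hx
  obtain ⟨b, hb⟩ := my_uo_bounded hDed hLat (fun n => |x n|)
    (fun n => abs_nonneg (x n)) (fun u hu => hx u hu)
  have hb0 : (0:E) ≤ b := (abs_nonneg (x 0)).trans (hb 0)
  obtain ⟨κ, hne, hpre, hdir, z, h1, h2, h3⟩ := hx b hb0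
  have hx_oc : OConvZero x := by
    refine ⟨κ, hne, hpre, hdir, z, h1, h2, fun β => ?_⟩
    obtain ⟨α₀, h4⟩ := h3 β
    refine ⟨α₀, fun a ha => ?_⟩
    have h5 := h4 a ha
    rwa [abs_of_nonneg (le_inf (abs_nonneg (x a)) hb0), inf_eq_left.mpr (hb a)] at h5
  exact hT x hx_oc
end

section
/- The rank-one operator $T:\ell^1\to\ell^\infty$, $T(x)=(\sum_i x_i,\sum_i x_i,\ldots)$, is compact (hence un-compact) but not unbounded norm continuous. -/
open Filter Topology

def unNhds {E : Type*} [NormedAddCommGroup E] [Lattice E] [HasSolidNorm E] [IsOrderedAddMonoid E] (x : E) : Filter E :=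
  ⨅ (u : E) (_ : 0 ≤ u) (ε : ℝ) (_ : 0 < ε), 𝓟 {y | ‖|y - x| ⊓ u‖ < ε}

/-- A set is relatively un-compact if every proper filter on it has a un-cluster
point (in the ambient space). -/
def RelUnCompact {E : Type*} [NormedAddCommGroup E] [Lattice E] [HasSolidNorm E] [IsOrderedAddMonoid E] (A : Set E) : Prop :=
  ∀ l : Filter E, l.NeBot → l ≤ Filter.principal A → ∃ x, (unNhds x ⊓ l).NeBot

def UnContinuous {E F : Type*} [NormedAddCommGroup E] [Lattice E] [HasSolidNorm E] [IsOrderedAddMonoid E] [Module ℝ E]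
    [NormedAddCommGroup F] [Lattice F] [HasSolidNorm F] [IsOrderedAddMonoid F] [Module ℝ F] (T : E →ₗ[ℝ] F) : Prop :=
  ∀ (ι : Type) (_ : Nonempty ι) (_ : Preorder ι) (_ : IsDirected ι (· ≤ ·))
    (x : ι → E), UNConvZero x → UNConvZero (fun a => T (x a))

namespace SummingOpAux
open MeasureTheory

lemma ae_count_all {p : ℕ → Prop} (h : ∀ᵐ a ∂(Measure.count : Measure ℕ), p a) (n : ℕ) : p n := by
  by_contra hn
  have h0 : (Measure.count : Measure ℕ) {a | ¬ p a} = 0 := h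
  rw [Measure.count_eq_zero_iff] at h0
  exact absurd h0 (Set.nonempty_iff_ne_empty.mp ⟨n, hn⟩)

noncomputable def en (n : ℕ) : Lp ℝ 1 (Measure.count : Measure ℕ) :=
  indicatorConstLp 1 (measurableSet_singleton n)
    (by rw [Measure.count_singleton]; exact ENNReal.one_ne_top) (1 : ℝ)

lemma integral_en (n : ℕ) : ∫ a, en n a ∂(Measure.count : Measure ℕ) = 1 := by
  rw [en, integral_indicatorConstLp, measureReal_def, Measure.count_singleton]
  simp

section Main
variable (T : Lp ℝ 1 (Measure.count : Measure ℕ) →L[ℝ] Lp ℝ ⊤ (Measure.count : Measure ℕ))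
  (hTdef : ∀ x : Lp ℝ 1 (Measure.count : Measure ℕ),
    (T x : ℕ → ℝ) =ᵐ[(Measure.count : Measure ℕ)]
      fun _ => ∫ a, x a ∂(Measure.count : Measure ℕ))

include hTdef

lemma T_apply (x : Lp ℝ 1 (Measure.count : Measure ℕ)) :
    T x = (∫ a, x a ∂(Measure.count : Measure ℕ)) • T (en 0) := by
  apply Lp.ext
  have h1 := hTdef x
  have h2 := hTdef (en 0)
  have h3 := Lp.coeFn_smul (∫ a, x a ∂(Measure.count : Measure ℕ)) (T (en 0))
  filter_upwards [h1, h2, h3] with i hi1 hi2 hi3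
  rw [hi1, hi3, Pi.smul_apply, hi2, integral_en]
  simp

lemma T_en (n : ℕ) : T (en n) = T (en 0) := by
  rw [T_apply T hTdef (en n), integral_en]
  simp

lemma T_en0_ne : T (en 0) ≠ 0 := by
  intro h
  have h2 := hTdef (en 0)
  rw [h] at h2
  have := ae_count_all ((Lp.coeFn_zero ℝ ⊤ (Measure.count : Measure ℕ)).symm.trans h2) 0
  rw [integral_en] at this
  simpa using this

end Main

lemma nhds_le_unNhds {E : Type*} [NormedAddCommGroup E] [Lattice E] [HasSolidNorm E] [IsOrderedAddMonoid E] (x : E) : 𝓝 x ≤ unNhds x := by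
  refine le_iInf fun u => le_iInf fun hu => le_iInf fun ε => le_iInf fun hε => le_principal_iff.mpr ?_
  refine Filter.mem_of_superset (Metric.ball_mem_nhds x hε) fun y hy => ?_
  have h0 : 0 ≤ |y - x| ⊓ u := le_inf (abs_nonneg _) hu
  have : ‖|y - x| ⊓ u‖ ≤ ‖y - x‖ := by
    refine norm_le_norm_of_abs_le_abs ?_
    rw [abs_of_nonneg h0]
    exact inf_le_left
  calc ‖|y - x| ⊓ u‖ ≤ ‖y - x‖ := this
    _ < ε := by rwa [← dist_eq_norm]



lemma en_coeFn (n : ℕ) :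
    ⇑(en n) =ᵐ[(Measure.count : Measure ℕ)] Set.indicator {n} (fun _ => (1:ℝ)) :=
  indicatorConstLp_coeFn

lemma unconv_en : UNConvZero (en : ℕ → Lp ℝ 1 (Measure.count : Measure ℕ)) := by
  intro u hu
  have hu' : ∀ i, (0:ℝ) ≤ u i := ae_count_all ((Lp.coeFn_nonneg u).mpr hu)
  set v : ℕ → Lp ℝ 1 (Measure.count : Measure ℕ) := fun n =>
    indicatorConstLp 1 (measurableSet_singleton n)
      (by rw [Measure.count_singleton]; exact ENNReal.one_ne_top) (u n) with hv
  have hle : ∀ n, |en n| ⊓ u ≤ v n := by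
    intro n
    refine (Lp.coeFn_le _ _).mp ?_
    filter_upwards [Lp.coeFn_inf |en n| u, Lp.coeFn_abs (en n), en_coeFn n,
      (indicatorConstLp_coeFn :
        ⇑(v n) =ᵐ[(Measure.count : Measure ℕ)] Set.indicator {n} (fun _ => u n))]
      with i h1 h2 h3 h4
    rw [h1, Pi.inf_apply, h2, h3, h4]
    by_cases hi : i = n
    · subst hi
      simp only [Set.indicator_of_mem (Set.mem_singleton i)]
      exact le_trans inf_le_right le_rfl
    · rw [Set.indicator_of_notMem (by simpa using hi), Set.indicator_of_notMem (by simpa using hi)]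
      simp [inf_eq_left.mpr (hu' i)]
  have hnn : ∀ n, (0:Lp ℝ 1 (Measure.count : Measure ℕ)) ≤ |en n| ⊓ u :=
    fun n => le_inf (abs_nonneg _) hu
  have hbound : ∀ n, ‖|en n| ⊓ u‖ ≤ ‖u n‖ := by
    intro n
    have h1 : ‖|en n| ⊓ u‖ ≤ ‖v n‖ := by
      refine norm_le_norm_of_abs_le_abs ?_
      rw [abs_of_nonneg (hnn n), abs_of_nonneg (le_trans (hnn n) (hle n))]
      exact hle n
    have h2 : ‖v n‖ = ‖u n‖ := by
      rw [hv, norm_indicatorConstLp one_ne_zero ENNReal.one_ne_top, measureReal_def, Measure.count_singleton]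
      simp
    rw [← h2]; exact h1
  have hsum : Summable (fun n => ‖u n‖) := integrable_count_iff.mp (L1.integrable_coeFn u)
  exact squeeze_zero (fun n => norm_nonneg _) hbound hsum.tendsto_atTop_zero

section Main2
variable (T : Lp ℝ 1 (Measure.count : Measure ℕ) →L[ℝ] Lp ℝ ⊤ (Measure.count : Measure ℕ))
  (hTdef : ∀ x : Lp ℝ 1 (Measure.count : Measure ℕ),
    (T x : ℕ → ℝ) =ᵐ[(Measure.count : Measure ℕ)]
      fun _ => ∫ a, x a ∂(Measure.count : Measure ℕ))

include hTdef

lemma T_compact' : ∃ K : Set (Lp ℝ ⊤ (Measure.count : Measure ℕ)),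
    IsCompact K ∧ Metric.closedBall 0 1 ⊆ ⇑T ⁻¹' K := by
  refine ⟨(fun r : ℝ => r • T (en 0)) '' Set.Icc (-1:ℝ) 1,
    isCompact_Icc.image (continuous_id.smul continuous_const), fun x hx => ?_⟩
  refine ⟨∫ a, x a ∂(Measure.count : Measure ℕ), ?_, (T_apply T hTdef x).symm⟩
  have hb : ‖∫ a, x a ∂(Measure.count : Measure ℕ)‖ ≤ 1 := by
    calc ‖∫ a, x a ∂(Measure.count : Measure ℕ)‖
        ≤ ∫ a, ‖x a‖ ∂(Measure.count : Measure ℕ) := norm_integral_le_integral_norm _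
      _ = ‖x‖ := (L1.norm_eq_integral_norm x).symm
      _ ≤ 1 := by simpa [dist_zero_right] using hx
  rw [Real.norm_eq_abs, abs_le] at hb
  exact ⟨hb.1, hb.2⟩

lemma T_isCompactOperator : IsCompactOperator ⇑T := by
  obtain ⟨K, hK, hsub⟩ := T_compact' T hTdef
  exact ⟨K, hK, Filter.mem_of_superset (Metric.closedBall_mem_nhds 0 one_pos) hsub⟩

lemma T_relUnCompact : RelUnCompact (⇑T '' Metric.closedBall 0 1) := by
  obtain ⟨K, hK, hsub⟩ := T_compact' T hTdef
  intro l hl hla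
  have hK' : l ≤ Filter.principal K :=
    le_trans hla (Filter.principal_mono.mpr (Set.image_subset_iff.mpr hsub))
  obtain ⟨x, -, hx⟩ := hK hK'
  exact ⟨x, Filter.NeBot.mono hx (inf_le_inf_right l (nhds_le_unNhds x))⟩

lemma T_not_unContinuous : ¬ UnContinuous
    (T : Lp ℝ 1 (Measure.count : Measure ℕ) →ₗ[ℝ] Lp ℝ ⊤ (Measure.count : Measure ℕ)) := by
  intro h
  have h2 := h ℕ inferInstance inferInstance inferInstance en unconv_en
    |T (en 0)| (abs_nonneg _)
  have h3 : (fun n : ℕ =>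
      ‖|(T : Lp ℝ 1 (Measure.count : Measure ℕ) →ₗ[ℝ]
          Lp ℝ ⊤ (Measure.count : Measure ℕ)) (en n)| ⊓ |T (en 0)|‖)
      = fun _ : ℕ => ‖T (en 0)‖ := by
    funext n
    rw [ContinuousLinearMap.coe_coe, T_en T hTdef n, inf_idem, norm_abs_eq_norm]
  rw [h3] at h2
  have h4 : ‖T (en 0)‖ = 0 := tendsto_nhds_unique tendsto_const_nhds h2
  exact T_en0_ne T hTdef (norm_eq_zero.mp h4)

end Main2

end SummingOpAux

open MeasureTheory in
/-- the rank one summing operator T : ℓ¹ → ℓ∞ is a compact operator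
(hence un-compact: the image of the closed unit ball is relatively un-compact),
but it is not unbounded norm continuous. -/
theorem summing_operator_compact_not_unContinuous
    (T : Lp ℝ 1 (Measure.count : Measure ℕ) →L[ℝ] Lp ℝ ⊤ (Measure.count : Measure ℕ))
    (hTdef : ∀ x : Lp ℝ 1 (Measure.count : Measure ℕ),
      (T x : ℕ → ℝ) =ᵐ[(Measure.count : Measure ℕ)]
        fun _ => ∫ a, x a ∂(Measure.count : Measure ℕ)) :
    IsCompactOperator T ∧
    RelUnCompact (T '' Metric.closedBall 0 1) ∧
    ¬ UnContinuous (T : Lp ℝ 1 (Measure.count : Measure ℕ) →ₗ[ℝ]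
        Lp ℝ ⊤ (Measure.count : Measure ℕ)) :=
  ⟨SummingOpAux.T_isCompactOperator T hTdef, SummingOpAux.T_relUnCompact T hTdef,
    SummingOpAux.T_not_unContinuous T hTdef⟩
end

section
/- Let $T:E\to F$ be a bounded operator between Banach lattices with $T(E^+)=F^+$ and such that $\ker(T)$ is an ideal of $E$. Then $T$ is a surjective lattice homomorphism, and $T$ is unbounded norm continuous. -/
open Filter Topology

/-!
A positive operator `T` with `T(E⁺) = F⁺` whose kernel is an ideal preserves positive parts:
pick `w ≥ 0` with `T w = (T x)⁺`; then `T (x - w) ≤ 0`, so for any `v ≥ 0` with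
`T v = -T (x - w)` the element `(x - w)⁺ ≤ |x - w + v|` lies in the ideal `ker T`, and hence
`T x⁺ ≤ T (x ⊔ w) = T w + T (x - w)⁺ = (T x)⁺`. So `T` is a lattice homomorphism, onto since
`y = y⁺ - y⁻`. Given a positive `u = T v`, the identity `|T xₐ| ⊓ u = T (|xₐ| ⊓ v)` bounds
`‖|T xₐ| ⊓ u‖` by `‖T‖ ‖|xₐ| ⊓ v‖`, which is un-continuity.
-/

section LatticeOrderedGroup

variable {E F G : Type*} [Lattice E] [AddCommGroup E] [Lattice F] [AddCommGroup F]
  [FunLike G E F] [AddMonoidHomClass G E F] {f : G}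

lemma map_abs_of_map_sup (h : ∀ x y : E, f (x ⊔ y) = f x ⊔ f y) (x : E) : f |x| = |f x| := by
  rw [abs, abs, h, map_neg]

variable [IsOrderedAddMonoid F]

lemma surjective_of_nonneg_subset_image (hpos : {y : F | 0 ≤ y} ⊆ f '' {x | 0 ≤ x}) :
    Function.Surjective f := by
  intro y
  obtain ⟨a, -, ha⟩ := hpos (posPart_nonneg y)
  obtain ⟨b, -, hb⟩ := hpos (negPart_nonneg y)
  exact ⟨a - b, by rw [map_sub, ha, hb, posPart_sub_negPart]⟩

variable [IsOrderedAddMonoid E]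

lemma map_posPart_eq_zero_of_map_nonpos (hpos : {y : F | 0 ≤ y} ⊆ f '' {x | 0 ≤ x})
    (hker : ∀ x y : E, |x| ≤ |y| → f y = 0 → f x = 0) {u : E} (hu : f u ≤ 0) : f u⁺ = 0 := by
  obtain ⟨v, hv, hfv⟩ := hpos (neg_nonneg.2 hu)
  refine hker _ (u + v) ?_ (by rw [map_add, hfv, add_neg_cancel])
  calc |u⁺| = u⁺ := abs_of_nonneg (posPart_nonneg u)
    _ ≤ (u + v)⁺ := posPart_mono (le_add_of_nonneg_right hv)
    _ ≤ |u + v| := sup_le (le_abs_self _) (abs_nonneg _)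

lemma map_posPart_of_image_nonneg (hpos : f '' {x | 0 ≤ x} = {y : F | 0 ≤ y})
    (hker : ∀ x y : E, |x| ≤ |y| → f y = 0 → f x = 0) (x : E) : f x⁺ = (f x)⁺ := by
  have hmono : Monotone f := (monotone_iff_map_nonneg f).2 fun a ha => hpos.subset ⟨a, ha, rfl⟩
  obtain ⟨w, hw, hfw⟩ := hpos.superset (posPart_nonneg (f x))
  have hxw : f (x - w)⁺ = 0 :=
    map_posPart_eq_zero_of_map_nonpos hpos.superset hker
      (by rw [map_sub, hfw, sub_nonpos]; exact le_posPart _)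
  refine le_antisymm ?_ (sup_le (hmono (le_posPart x)) (hpos.subset ⟨_, posPart_nonneg x, rfl⟩))
  calc f x⁺ ≤ f (x ⊔ w) := hmono (sup_le_sup_left hw x)
    _ = (f x)⁺ := by rw [sup_eq_add_posPart_sub, map_add, hxw, add_zero, hfw]

lemma map_sup_of_map_posPart (h : ∀ x : E, f x⁺ = (f x)⁺) (x y : E) : f (x ⊔ y) = f x ⊔ f y := by
  rw [sup_eq_add_posPart_sub, map_add, h, map_sub, ← sup_eq_add_posPart_sub]

lemma map_inf_of_map_sup (h : ∀ x y : E, f (x ⊔ y) = f x ⊔ f y) (x y : E) :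
    f (x ⊓ y) = f x ⊓ f y := by
  rw [← neg_neg (x ⊓ y), neg_inf, map_neg, h, map_neg, map_neg, neg_sup, neg_neg, neg_neg]

end LatticeOrderedGroup

section NormedLattice

variable {E F : Type*} [NormedAddCommGroup E] [Lattice E] [IsOrderedAddMonoid E] [NormedSpace ℝ E]
  [NormedAddCommGroup F] [Lattice F] [IsOrderedAddMonoid F] [NormedSpace ℝ F]

lemma UNConvZero.map_of_surjective {ι : Type*} [Preorder ι] {x : ι → E} (hx : UNConvZero x)
    (T : E →L[ℝ] F) (hsurj : Function.Surjective T) (hsup : ∀ x y : E, T (x ⊔ y) = T x ⊔ T y) :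
    UNConvZero fun a => T (x a) := by
  intro u hu
  obtain ⟨v, rfl⟩ := hsurj u
  have habs : T |v| = T v := by rw [map_abs_of_map_sup hsup, abs_of_nonneg hu]
  have hbound (a : ι) : ‖|T (x a)| ⊓ T v‖ ≤ ‖T‖ * ‖|x a| ⊓ |v|‖ := by
    rw [← habs, ← map_abs_of_map_sup hsup, ← map_inf_of_map_sup hsup]
    exact T.le_opNorm _
  have hlim := (hx |v| (abs_nonneg v)).const_mul ‖T‖
  rw [mul_zero] at hlim
  exact squeeze_zero (fun _ => norm_nonneg _) hbound hlim

end NormedLattice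

theorem unContinuous_of_pos_surjective_ideal_kernel_general
    {E F : Type*} [NormedAddCommGroup E] [Lattice E] [HasSolidNorm E] [IsOrderedAddMonoid E] [NormedSpace ℝ E]
    [NormedAddCommGroup F] [Lattice F] [HasSolidNorm F] [IsOrderedAddMonoid F] [NormedSpace ℝ F]
    (T : E →L[ℝ] F)
    (hpos : T '' {x : E | 0 ≤ x} = {y : F | 0 ≤ y})
    (hker : ∀ x y : E, |x| ≤ |y| → T y = 0 → T x = 0) :
    (∀ x y : E, T (x ⊔ y) = T x ⊔ T y) ∧ Function.Surjective T ∧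
      UnContinuous (T : E →ₗ[ℝ] F) := by
  have hsup := map_sup_of_map_posPart (map_posPart_of_image_nonneg hpos hker)
  have hsurj := surjective_of_nonneg_subset_image hpos.superset
  exact ⟨hsup, hsurj, fun _ _ _ _ _ hx => hx.map_of_surjective T hsurj hsup⟩

/-- a bounded operator between Banach lattices with T(E⁺)=F⁺ whose
kernel is an ideal is a surjective lattice homomorphism, and is un-continuous. -/
theorem unContinuous_of_pos_surjective_ideal_kernel
    {E F : Type*} [NormedAddCommGroup E] [Lattice E] [HasSolidNorm E] [IsOrderedAddMonoid E] [NormedSpace ℝ E] [CompleteSpace E]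
    [NormedAddCommGroup F] [Lattice F] [HasSolidNorm F] [IsOrderedAddMonoid F] [NormedSpace ℝ F] [CompleteSpace F]
    (T : E →L[ℝ] F)
    (hpos : T '' {x : E | 0 ≤ x} = {y : F | 0 ≤ y})
    (hker : ∀ x y : E, |x| ≤ |y| → T y = 0 → T x = 0) :
    (∀ x y : E, T (x ⊔ y) = T x ⊔ T y) ∧ Function.Surjective T ∧
      UnContinuous (T : E →ₗ[ℝ] F) :=
  unContinuous_of_pos_surjective_ideal_kernel_general T hpos hker
end

section
/- For order bounded nets in a vector lattice, unbounded order convergence is equivalent to order convergence; in particular, if $E$ is Dedekind $\sigma$-complete and laterally $\sigma$-complete, then every uo-null sequence in $E$ is order null. -/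
open Filter Topology

section AuxUO

variable {E : Type*} [Lattice E] [AddCommGroup E] [CovariantClass E E (· + ·) (· ≤ ·)]

private lemma uo_abs_of_nonneg {a : E} (h : 0 ≤ a) : |a| = a := by
  rw [abs]
  exact sup_eq_left.2 ((neg_nonpos.2 h).trans h)

private lemma uo_inf_sup (a b c : E) : a ⊓ (b ⊔ c) = (a ⊓ b) ⊔ (a ⊓ c) := by
  letI := AddCommGroup.toDistribLattice E
  exact inf_sup_left a b c

private lemma uo_inf_add_le {a x y : E} (ha : 0 ≤ a) (hx : 0 ≤ x) (hy : 0 ≤ y) :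
    a ⊓ (x + y) ≤ a ⊓ x + a ⊓ y := by
  rw [← sub_le_iff_le_add']
  rw [sub_inf a x (a ⊓ (x + y))]
  apply sup_le
  · exact (sub_nonpos.2 inf_le_left).trans (le_inf ha hy)
  · refine le_inf ((sub_le_sub_right inf_le_left x).trans (sub_le_self a hx)) ?_
    exact (sub_le_sub_right inf_le_right x).trans (by rw [add_sub_cancel_left])

private lemma uo_disj_nsmul {a b : E} (ha : 0 ≤ a) (hb : 0 ≤ b) (h : a ⊓ b = 0) :
    ∀ n : ℕ, a ⊓ n • b = 0 := by
  intro n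
  induction n with
  | zero => rw [zero_nsmul]; exact inf_eq_right.2 ha
  | succ n ih =>
      have hnb : 0 ≤ n • b := by simpa using nsmul_le_nsmul_right hb n
      refine le_antisymm ?_ (le_inf ha (by simpa using nsmul_le_nsmul_right hb (n+1)))
      calc a ⊓ (n+1) • b = a ⊓ (n • b + b) := by rw [succ_nsmul]
        _ ≤ a ⊓ n • b + a ⊓ b := uo_inf_add_le ha hnb hb
        _ = 0 := by rw [ih, h, add_zero]

private lemma uo_posPart_of_disj {p q : E} (h : p ⊓ q = 0) : (p - q)⁺ = p := by
  have hsup : p ⊔ q = p + q := by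
    have h1 := inf_add_sup p q
    rw [h, zero_add] at h1
    exact h1
  have h2 : (p ⊔ q) - q = (p - q) ⊔ (q - q) := by
    simp only [sub_eq_add_neg, sup_add]
  rw [sub_self] at h2
  rw [posPart_def, ← h2, hsup, add_sub_cancel_right]

private lemma uo_nsmul_posPart (a : E) (n : ℕ) : (n • a)⁺ = n • a⁺ := by
  have h1 : a⁻ ⊓ n • a⁺ = 0 :=
    uo_disj_nsmul (negPart_nonneg a) (posPart_nonneg a)
      (by rw [inf_comm]; exact posPart_inf_negPart_eq_zero a) n
  have h2 : (n • a⁺) ⊓ (n • a⁻) = 0 := by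
    have h0 : 0 ≤ n • a⁺ := by simpa using nsmul_le_nsmul_right (posPart_nonneg a) n
    exact uo_disj_nsmul h0 (negPart_nonneg a) (by rw [inf_comm]; exact h1) n
  have h3 : n • a = n • a⁺ - n • a⁻ := by
    rw [← nsmul_sub, posPart_sub_negPart]
  rw [h3, uo_posPart_of_disj h2]

private lemma uo_nsmul_sup (a b : E) (n : ℕ) : n • (a ⊔ b) = n • a ⊔ n • b := by
  have h1 : a ⊔ b = a + (b - a)⁺ := by
    rw [posPart_def, add_sup, add_sub_cancel, add_zero, sup_comm]
  have h2 : n • a ⊔ n • b = n • a + (n • b - n • a)⁺ := by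
    rw [posPart_def, add_sup, add_sub_cancel, add_zero, sup_comm]
  rw [h1, h2, nsmul_add, ← uo_nsmul_posPart, nsmul_sub]

private lemma uo_isLUB_inf {ι : Sort*} {f : ι → E} {p : E}
    (hp : IsLUB (Set.range f) p) (r : E) :
    IsLUB (Set.range fun i => f i ⊓ r) (p ⊓ r) := by
  constructor
  · rintro t ⟨i, rfl⟩
    exact inf_le_inf_right r (hp.1 (Set.mem_range_self i))
  · intro c hc
    have key : ∀ i, f i ≤ c + ((p ⊔ r) - r) := by
      intro i
      have h2 : f i ⊓ r ≤ c := hc (Set.mem_range_self i)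
      have h3 : (f i ⊔ r) - r ≤ (p ⊔ r) - r :=
        sub_le_sub_right (sup_le_sup_right (hp.1 (Set.mem_range_self i)) r) r
      calc f i = (f i ⊓ r) + ((f i ⊔ r) - r) := by
            rw [← add_sub_assoc, inf_add_sup, add_sub_cancel_right]
        _ ≤ c + ((p ⊔ r) - r) := add_le_add h2 h3
    have h4 : p ≤ c + ((p ⊔ r) - r) := hp.2 (by rintro t ⟨i, rfl⟩; exact key i)
    have h5 : p + r - (p ⊔ r) ≤ c := by
      rw [sub_le_iff_le_add]
      calc p + r ≤ (c + ((p ⊔ r) - r)) + r := add_le_add_left h4 r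
        _ = c + (p ⊔ r) := by abel
    have h6 : p ⊓ r = p + r - (p ⊔ r) := by
      have := inf_add_sup p r
      rw [← this]; abel
    rw [h6]; exact h5

private lemma uo_arch
    (hDC : ∀ x : ℕ → E, (∃ b, ∀ n, x n ≤ b) → ∃ s, IsLUB (Set.range x) s)
    {v x0 : E} (hv : ∀ n : ℕ, n • v ≤ x0) : v ≤ 0 := by
  obtain ⟨S, hS⟩ := hDC (fun n => n • v) ⟨x0, hv⟩
  have h1 : ∀ n : ℕ, n • v ≤ S - v := by
    intro n
    have h := hS.1 (Set.mem_range_self (n + 1))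
    rw [succ_nsmul] at h
    exact le_sub_iff_add_le.2 h
  have h2 : S ≤ S - v := hS.2 (by rintro t ⟨n, rfl⟩; exact h1 n)
  have h3 : S + v ≤ S := le_sub_iff_add_le.1 h2
  have h4 := sub_le_sub_right h3 S
  simpa using h4

private lemma uo_proj_disj
    (hDC : ∀ x : ℕ → E, (∃ b, ∀ n, x n ≤ b) → ∃ s, IsLUB (Set.range x) s)
    {z S u : E} (hz : 0 ≤ z) (hu : 0 ≤ u)
    (hSz : S ≤ z) (hS : ∀ j : ℕ, z ⊓ j • u ≤ S) : (z - S) ⊓ u = 0 := by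
  have hw0 : (0:E) ≤ (z - S) ⊓ u := le_inf (sub_nonneg.2 hSz) hu
  have key : ∀ n : ℕ, n • ((z - S) ⊓ u) ≤ z ⊓ n • u := by
    intro n
    induction n with
    | zero => rw [zero_nsmul, zero_nsmul]; exact le_inf hz le_rfl
    | succ n ih =>
        have h1 : (z - S) ⊓ u ≤ z - (z ⊓ n • u) :=
          inf_le_left.trans (sub_le_sub_left (hS n) z)
        have h2 : (n+1) • ((z - S) ⊓ u) ≤ z := by
          rw [succ_nsmul]
          calc n • ((z - S) ⊓ u) + (z - S) ⊓ u
              ≤ (z ⊓ n • u) + (z - (z ⊓ n • u)) := add_le_add ih h1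
            _ = z := by abel
        have h3 : (n+1) • ((z - S) ⊓ u) ≤ (n+1) • u := nsmul_le_nsmul_right inf_le_right _
        exact le_inf h2 h3
  have hle : (z - S) ⊓ u ≤ 0 :=
    uo_arch hDC (fun n => (key n).trans inf_le_left)
  exact le_antisymm hle hw0

private lemma uo_part1 {ι : Type} [Nonempty ι] [Preorder ι] (x : ι → E)
    (hb : ∃ b : E, ∀ a, |x a| ≤ b) : UOConvZero x ↔ OConvZero x := by
  constructor
  · intro h
    obtain ⟨b, hb⟩ := hb
    have hb0 : 0 ≤ b := le_trans (abs_nonneg _) (hb (Classical.arbitrary ι))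
    obtain ⟨κ, hκ, hκpre, hκdir, z, hanti, hglb, hconv⟩ := h b hb0
    refine ⟨κ, hκ, hκpre, hκdir, z, hanti, hglb, fun β => ?_⟩
    obtain ⟨a₀, ha₀⟩ := hconv β
    refine ⟨a₀, fun a ha => ?_⟩
    have h1 : |(|x a| ⊓ b)| ≤ z β := ha₀ a ha
    rw [uo_abs_of_nonneg (le_inf (abs_nonneg _) hb0)] at h1
    rwa [inf_eq_left.2 (hb a)] at h1
  · intro h u hu
    obtain ⟨κ, hκ, hκpre, hκdir, z, hanti, hglb, hconv⟩ := h
    refine ⟨κ, hκ, hκpre, hκdir, z, hanti, hglb, fun β => ?_⟩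
    obtain ⟨a₀, ha₀⟩ := hconv β
    refine ⟨a₀, fun a ha => ?_⟩
    show |(|x a| ⊓ u)| ≤ z β
    rw [uo_abs_of_nonneg (le_inf (abs_nonneg _) hu)]
    exact inf_le_left.trans (ha₀ a ha)

private lemma uo_part2_bound
    (hDC : ∀ x : ℕ → E, (∃ b, ∀ n, x n ≤ b) → ∃ s, IsLUB (Set.range x) s)
    (hLat : ∀ x : ℕ → E, (∀ n, 0 ≤ x n) → (∀ n m, n ≠ m → x n ⊓ x m = 0) →
      ∃ s, IsLUB (Set.range x) s)
    (x : ℕ → E) (hx : UOConvZero x) : ∃ b : E, ∀ n, |x n| ≤ b := by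
  classical
  set y : ℕ → E := fun n => |x n| with hy_def
  have hy : ∀ n, 0 ≤ y n := fun n => abs_nonneg _
  set s : ℕ → E := fun n => partialSups y n with hs_def
  have hsmono : Monotone s := (partialSups y).monotone
  have hys : ∀ {i n : ℕ}, i ≤ n → y i ≤ s n := fun h => le_partialSups_of_le y h
  have hsnn : ∀ n, 0 ≤ s n := fun n => (hy 0).trans (hys (Nat.zero_le n))
  set g : ℕ → ℕ → E := fun M i => (y i - s M)⁺ with hg_def
  have hgnn : ∀ M i, 0 ≤ g M i := fun M i => posPart_nonneg _
  have hganti : ∀ {M M' : ℕ} (i : ℕ), M ≤ M' → g M' i ≤ g M i :=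
    fun i h => posPart_mono (sub_le_sub_left (hsmono h) _)
  have hgzero : ∀ {M i : ℕ}, i ≤ M → g M i = 0 :=
    fun h => posPart_eq_zero.2 (sub_nonpos.2 (hys h))
  set v : ℕ → ℕ → E := fun M k => partialSups (g M) k with hv_def
  have hv_zero : ∀ M, v M 0 = g M 0 := fun M => partialSups_zero (g M)
  have hv_succ : ∀ M k, v M (k+1) = v M k ⊔ g M (k+1) := fun M k => partialSups_succ (g M) k
  have hvmono : ∀ M, Monotone (v M) := fun M => (partialSups (g M)).monotone
  have hgv : ∀ {M i k : ℕ}, i ≤ k → g M i ≤ v M k := fun h => le_partialSups_of_le _ h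
  have hvnn : ∀ M k, 0 ≤ v M k := fun M k => (hgnn M 0).trans (hgv (Nat.zero_le k))
  have hvanti : ∀ {M M' : ℕ} (k : ℕ), M ≤ M' → v M' k ≤ v M k := by
    intro M M' k h
    induction k with
    | zero => rw [hv_zero, hv_zero]; exact hganti 0 h
    | succ k ih => rw [hv_succ, hv_succ]; exact sup_le_sup ih (hganti (k+1) h)
  have hjnn : ∀ (j : ℕ) {a : E}, 0 ≤ a → 0 ≤ j • a :=
    fun j a ha => by simpa using nsmul_le_nsmul_right ha j
  -- tail suprema T
  have hTex : ∀ m N, ∃ t, IsLUB (Set.range fun k => y (N + k) ⊓ s m) t :=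
    fun m N => hDC _ ⟨s m, fun k => inf_le_right⟩
  choose T hT using hTex
  have hTnn : ∀ m N, 0 ≤ T m N := by
    intro m N
    have h := (hT m N).1 (Set.mem_range_self 0)
    exact (le_inf (hy (N + 0)) (hsnn m)).trans h
  have hTle : ∀ m N n, N ≤ n → y n ⊓ s m ≤ T m N := by
    intro m N n h
    have h2 := (hT m N).1 (Set.mem_range_self (n - N))
    rwa [Nat.add_sub_cancel' h] at h2
  have hTglb : ∀ m (e : E), (∀ N, e ≤ T m N) → e ≤ 0 := by
    intro m e he
    obtain ⟨κ, hκ, hκpre, hκdir, z, hanti, hglb, hconv⟩ := hx (s m) (hsnn m)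
    refine hglb.2 ?_
    rintro t ⟨β, rfl⟩
    obtain ⟨N₀, hN₀⟩ := hconv β
    refine (he N₀).trans ((hT m N₀).2 ?_)
    rintro t ⟨k, rfl⟩
    show y (N₀ + k) ⊓ s m ≤ z β
    have h1 : |(|x (N₀ + k)| ⊓ s m)| ≤ z β := hN₀ (N₀ + k) (Nat.le_add_right _ _)
    rwa [uo_abs_of_nonneg (le_inf (hy _) (hsnn m))] at h1
  -- pseudo band projections P
  have hPex : ∀ (M : ℕ) (z : E), ∃ p, IsLUB (Set.range fun k => z ⊓ k • v M k) p :=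
    fun M z => hDC _ ⟨z, fun k => inf_le_left⟩
  choose P hP using hPex
  have hPle : ∀ M z, P M z ≤ z :=
    fun M z => (hP M z).2 (by rintro t ⟨k, rfl⟩; exact inf_le_left)
  have hPnn : ∀ (M : ℕ) {z : E}, 0 ≤ z → 0 ≤ P M z := by
    intro M z hz
    have h0 : (0:E) ≤ z ⊓ (0:ℕ) • v M 0 := by rw [zero_nsmul]; exact le_inf hz le_rfl
    exact h0.trans ((hP M z).1 (Set.mem_range_self 0))
  have hPanti : ∀ {M M' : ℕ} (z : E), M ≤ M' → P M' z ≤ P M z := by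
    intro M M' z h
    refine (hP M' z).2 ?_
    rintro t ⟨k, rfl⟩
    exact le_trans (inf_le_inf_left z (nsmul_le_nsmul_right (hvanti k h) k))
      ((hP M z).1 (Set.mem_range_self k))
  have hPub : ∀ (M : ℕ) (z : E) (j k₀ : ℕ), z ⊓ j • v M k₀ ≤ P M z := by
    intro M z j k₀
    have h1 : j • v M k₀ ≤ (max j k₀) • v M (max j k₀) :=
      le_trans (nsmul_le_nsmul_left (hvnn M k₀) (le_max_left _ _))
        (nsmul_le_nsmul_right (hvmono M (le_max_right _ _)) _)
    exact le_trans (inf_le_inf_left z h1) ((hP M z).1 (Set.mem_range_self (max j k₀)))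
  have hPdisj : ∀ (M : ℕ) {z : E}, 0 ≤ z → ∀ k₀, (z - P M z) ⊓ v M k₀ = 0 :=
    fun M z hz k₀ => uo_proj_disj hDC hz (hvnn M k₀) (hPle M z) (fun j => hPub M z j k₀)
  have hDisP : ∀ (Q : ℕ) {r : E}, 0 ≤ r → (∀ k, r ⊓ v Q k = 0) →
      ∀ {M : ℕ} (z : E), 0 ≤ z → Q ≤ M → r ⊓ P M z = 0 := by
    intro Q r hr hrv M z hz hQM
    have h1 : ∀ k : ℕ, (z ⊓ k • v M k) ⊓ r ≤ 0 := by
      intro k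
      have h2 : r ⊓ k • v Q k = 0 := uo_disj_nsmul hr (hvnn Q k) (hrv k) k
      calc (z ⊓ k • v M k) ⊓ r ≤ (k • v Q k) ⊓ r :=
            inf_le_inf_right r (inf_le_right.trans (nsmul_le_nsmul_right (hvanti k hQM) k))
        _ = 0 := by rw [inf_comm]; exact h2
    have h3 : P M z ⊓ r ≤ 0 :=
      (uo_isLUB_inf (hP M z) r).2 (by rintro t ⟨k, rfl⟩; exact h1 k)
    refine le_antisymm ?_ (le_inf hr (hPnn M hz))
    rw [inf_comm]; exact h3
  -- a ≤ s M whenever a is disjoint from the "bad" generator g M n and a ≤ y n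
  have haux : ∀ {a : E} {M n : ℕ}, 0 ≤ a → a ≤ y n → a ⊓ g M n = 0 → a ≤ s M := by
    intro a M n ha hay hag
    have h3 : (a - s M)⁺ ≤ g M n := posPart_mono (sub_le_sub_right hay _)
    have h4 : (a - s M)⁺ ≤ a :=
      (posPart_mono (sub_le_self _ (hsnn M))).trans (le_of_eq (posPart_eq_self.2 ha))
    exact sub_nonpos.1 ((le_posPart _).trans ((le_inf h4 h3).trans hag.le))
  have hr'v : ∀ M n k, (y n - P M (y n)) ⊓ v M k = 0 := fun M n k => hPdisj M (hy n) k
  -- (A) : y n ≤ s M + P M (y n)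
  have hA : ∀ M n, y n ≤ s M + P M (y n) := by
    intro M n
    have hr0 : 0 ≤ y n - P M (y n) := sub_nonneg.2 (hPle M (y n))
    have hrg : (y n - P M (y n)) ⊓ g M n = 0 := by
      refine le_antisymm ?_ (le_inf hr0 (hgnn M n))
      exact le_trans (inf_le_inf_left _ (hgv le_rfl)) (hr'v M n n).le
    have h6 : y n - P M (y n) ≤ s M :=
      haux hr0 (sub_le_self _ (hPnn M (hy n))) hrg
    exact sub_le_iff_le_add.1 h6
  -- (Gen) generator-wise bound
  have hGen : ∀ {n N M : ℕ}, n ≤ M → N ≤ M → ∀ (j i : ℕ), y n ⊓ j • g M i ≤ T n N := by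
    intro n N M hnM hNM j i
    by_cases hiM : i ≤ M
    · rw [hgzero hiM, smul_zero]
      exact inf_le_right.trans (hTnn n N)
    · push_neg at hiM
      have hiN : N ≤ i := le_trans hNM (le_of_lt hiM)
      refine le_trans (le_inf ?_ (inf_le_left.trans (hys le_rfl))) (hTle n N i hiN)
      -- y n ⊓ j • g M i ≤ y i
      have hyn : y n ⊓ j • g M i ≤ s M ⊓ j • g M i :=
        inf_le_inf_right _ ((hys le_rfl).trans (hsmono hnM))
      refine hyn.trans ?_
      have hA1 : (s M ⊓ j • g M i - y i)⁺ ≤ j • g M i := by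
        refine le_trans (posPart_mono (sub_le_sub_right inf_le_right _)) ?_
        refine le_trans (posPart_mono (sub_le_self _ (hy i))) ?_
        exact le_of_eq (posPart_eq_self.2 (hjnn j (hgnn M i)))
      have hA2 : (s M ⊓ j • g M i - y i)⁺ ≤ (s M - y i)⁺ :=
        posPart_mono (sub_le_sub_right inf_le_left _)
      have hA3 : (s M - y i)⁺ = (y i - s M)⁻ := by
        rw [show s M - y i = -(y i - s M) by abel, posPart_neg]
      have hA4 : (j • g M i) ⊓ (s M - y i)⁺ = 0 := by
        rw [hA3, inf_comm]
        exact uo_disj_nsmul (negPart_nonneg _) (hgnn M i)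
          (by rw [inf_comm]; exact posPart_inf_negPart_eq_zero _) j
      have hA5 : s M ⊓ j • g M i - y i ≤ 0 :=
        (le_posPart _).trans ((le_inf hA1 hA2).trans hA4.le)
      exact sub_nonpos.1 hA5
  -- (B) : P M (y n) ≤ T n N for M large
  have hB : ∀ {n N M : ℕ}, n ≤ M → N ≤ M → P M (y n) ≤ T n N := by
    intro n N M hnM hNM
    refine (hP M (y n)).2 ?_
    rintro t ⟨k, rfl⟩
    have key : ∀ (k j : ℕ), y n ⊓ j • v M k ≤ T n N := by
      intro k
      induction k with
      | zero => intro j; rw [hv_zero]; exact hGen hnM hNM j 0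
      | succ k ih =>
          intro j
          rw [hv_succ, uo_nsmul_sup, uo_inf_sup]
          exact sup_le (ih j) (hGen hnM hNM j (k+1))
    exact key k k
  -- e-pieces: e M n = P M (y n) - P (M+1) (y n)
  have heDisj : ∀ {M : ℕ} (n : ℕ) {M' : ℕ} (z : E), 0 ≤ z → M + 1 ≤ M' →
      (P M (y n) - P (M+1) (y n)) ⊓ P M' z = 0 := by
    intro M n M' z hz h
    have he0 : 0 ≤ P M (y n) - P (M+1) (y n) := sub_nonneg.2 (hPanti _ (Nat.le_succ M))
    have h1 := hDisP (M+1) (sub_nonneg.2 (hPle (M+1) (y n))) (hr'v (M+1) n) z hz h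
    refine le_antisymm ?_ (le_inf he0 (hPnn _ hz))
    exact le_trans (inf_le_inf_right _ (sub_le_sub_right (hPle M (y n)) _)) h1.le
  have hePMs : ∀ M n, P M (y n) - P (M+1) (y n) ≤ P M (s (M+1)) := by
    intro M n
    have he0 : 0 ≤ P M (y n) - P (M+1) (y n) := sub_nonneg.2 (hPanti _ (Nat.le_succ M))
    have h1 : P M (y n) - P (M+1) (y n) ≤ P M (y n) := sub_le_self _ (hPnn _ (hy n))
    have hdg : (P M (y n) - P (M+1) (y n)) ⊓ g (M+1) n = 0 := by
      refine le_antisymm ?_ (le_inf he0 (hgnn _ _))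
      calc (P M (y n) - P (M+1) (y n)) ⊓ g (M+1) n
          ≤ (y n - P (M+1) (y n)) ⊓ v (M+1) n :=
            inf_le_inf (sub_le_sub_right (hPle M (y n)) _) (hgv le_rfl)
        _ = 0 := hr'v (M+1) n n
    have hes : P M (y n) - P (M+1) (y n) ≤ s (M+1) :=
      haux he0 (h1.trans (hPle _ _)) hdg
    have h5 : P M (y n) ⊓ (P M (y n) - P (M+1) (y n)) ≤ P M (s (M+1)) := by
      refine (uo_isLUB_inf (hP M (y n)) _).2 ?_
      rintro t ⟨k, rfl⟩
      refine le_trans (le_inf (inf_le_right.trans hes) (inf_le_left.trans inf_le_right)) ?_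
      exact (hP M (s (M+1))).1 (Set.mem_range_self k)
    calc P M (y n) - P (M+1) (y n)
        = P M (y n) ⊓ (P M (y n) - P (M+1) (y n)) := (inf_eq_right.2 h1).symm
      _ ≤ P M (s (M+1)) := h5
  -- the disjoint sequence d
  have hd0 : ∀ M, 0 ≤ P M (s (M+1)) - P (M+1) (s (M+1)) :=
    fun M => sub_nonneg.2 (hPanti _ (Nat.le_succ M))
  have hdd' : ∀ {a b : ℕ}, a < b →
      (P a (s (a+1)) - P (a+1) (s (a+1))) ⊓ (P b (s (b+1)) - P (b+1) (s (b+1))) = 0 := by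
    intro a b hab
    have h1 : P a (s (a+1)) - P (a+1) (s (a+1)) ≤ s (a+1) - P (a+1) (s (a+1)) :=
      sub_le_sub_right (hPle _ _) _
    have h2 : P b (s (b+1)) - P (b+1) (s (b+1)) ≤ P b (s (b+1)) :=
      sub_le_self _ (hPnn _ (hsnn _))
    have h3 := hDisP (a+1) (sub_nonneg.2 (hPle (a+1) (s (a+1))))
      (hPdisj (a+1) (hsnn (a+1))) (s (b+1)) (hsnn _) hab
    refine le_antisymm ?_ (le_inf (hd0 a) (hd0 b))
    exact le_trans (inf_le_inf h1 h2) h3.le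
  obtain ⟨w, hw⟩ := hLat (fun M => P M (s (M+1)) - P (M+1) (s (M+1))) hd0 (by
    intro a b hab
    rcases lt_or_gt_of_ne hab with h | h
    · exact hdd' h
    · rw [inf_comm]; exact hdd' h)
  have hdle : ∀ M, P M (s (M+1)) - P (M+1) (s (M+1)) ≤ w :=
    fun M => hw.1 (Set.mem_range_self M)
  have hw0 : 0 ≤ w := (hd0 0).trans (hdle 0)
  -- e M n ≤ d M
  have heled : ∀ M n, P M (y n) - P (M+1) (y n) ≤ P M (s (M+1)) - P (M+1) (s (M+1)) := by
    intro M n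
    have ha : P M (y n) - P (M+1) (y n) ≤ P M (s (M+1)) := hePMs M n
    have hb : P (M+1) (s (M+1)) ≤ P M (s (M+1)) := hPanti _ (Nat.le_succ M)
    have hdisj : (P M (y n) - P (M+1) (y n)) ⊓ P (M+1) (s (M+1)) = 0 :=
      heDisj n (s (M+1)) (hsnn _) le_rfl
    have hsum : (P M (y n) - P (M+1) (y n)) + P (M+1) (s (M+1)) ≤ P M (s (M+1)) := by
      have h2 := inf_add_sup (P M (y n) - P (M+1) (y n)) (P (M+1) (s (M+1)))
      rw [hdisj, zero_add] at h2
      rw [← h2]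
      exact sup_le ha hb
    exact le_sub_iff_add_le.2 hsum
  -- telescoping
  have hTel : ∀ n M, P 0 (y n) - P M (y n) ≤ w := by
    intro n M
    induction M with
    | zero => simpa using hw0
    | succ M ih =>
        have hb : P M (y n) - P (M+1) (y n) ≤ w := (heled M n).trans (hdle M)
        have hdisj : (P 0 (y n) - P M (y n)) ⊓ (P M (y n) - P (M+1) (y n)) = 0 := by
          have h1 := hDisP M (sub_nonneg.2 (hPle M (y n))) (hr'v M n) (y n) (hy n) le_rfl
          refine le_antisymm ?_ (le_inf (sub_nonneg.2 (hPanti _ (Nat.zero_le M)))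
            (sub_nonneg.2 (hPanti _ (Nat.le_succ M))))
          calc (P 0 (y n) - P M (y n)) ⊓ (P M (y n) - P (M+1) (y n))
              ≤ (y n - P M (y n)) ⊓ P M (y n) :=
                inf_le_inf (sub_le_sub_right (hPle 0 (y n)) _) (sub_le_self _ (hPnn _ (hy n)))
            _ = 0 := h1
        have hsum : (P 0 (y n) - P M (y n)) + (P M (y n) - P (M+1) (y n)) ≤ w := by
          have h2 := inf_add_sup (P 0 (y n) - P M (y n)) (P M (y n) - P (M+1) (y n))
          rw [hdisj, zero_add] at h2
          rw [← h2]
          exact sup_le ih hb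
        calc P 0 (y n) - P (M+1) (y n)
            = (P 0 (y n) - P M (y n)) + (P M (y n) - P (M+1) (y n)) := by abel
          _ ≤ w := hsum
  -- conclusion
  refine ⟨s 0 + w, fun n => ?_⟩
  have hfin : ∀ N, y n - (s 0 + w) ≤ T n N := by
    intro N
    have h1 : y n ≤ s 0 + P 0 (y n) := hA 0 n
    have h2 : P 0 (y n) - P (max n N) (y n) ≤ w := hTel n (max n N)
    have h3 : P (max n N) (y n) ≤ T n N := hB (le_max_left n N) (le_max_right n N)
    have h4 : P 0 (y n) ≤ w + P (max n N) (y n) := sub_le_iff_le_add.1 h2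
    calc y n - (s 0 + w) ≤ (s 0 + P 0 (y n)) - (s 0 + w) := sub_le_sub_right h1 _
      _ ≤ (s 0 + (w + P (max n N) (y n))) - (s 0 + w) :=
          sub_le_sub_right (add_le_add_right h4 _) _
      _ = P (max n N) (y n) := by abel
      _ ≤ T n N := h3
  exact sub_nonpos.1 (hTglb n _ hfin)

end AuxUO

/-- for order bounded nets, uo-convergence coincides with order
convergence; in particular, in a Dedekind σ-complete and laterally σ-complete
vector lattice, every uo-null sequence is order null. -/
theorem uo_eq_o_for_order_bounded
    {E : Type*} [Lattice E] [AddCommGroup E] [CovariantClass E E (· + ·) (· ≤ ·)] :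
    (∀ (ι : Type) (_ : Nonempty ι) (_ : Preorder ι) (_ : IsDirected ι (· ≤ ·))
      (x : ι → E), (∃ b : E, ∀ a, |x a| ≤ b) → (UOConvZero x ↔ OConvZero x)) ∧
    (∀ (_ : ∀ x : ℕ → E, (∃ b, ∀ n, x n ≤ b) → ∃ s, IsLUB (Set.range x) s)
      (_ : ∀ x : ℕ → E, (∀ n, 0 ≤ x n) → (∀ n m, n ≠ m → x n ⊓ x m = 0) →
        ∃ s, IsLUB (Set.range x) s)
      (x : ℕ → E), UOConvZero x → OConvZero x) := by
  constructor
  · intro ι hne hpre hdir x hb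
    exact @uo_part1 E _ _ _ ι hne hpre x hb
  · intro hDC hLat x hx
    exact (@uo_part1 E _ _ _ ℕ inferInstance inferInstance x (uo_part2_bound hDC hLat x hx)).1 hx
end
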